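/- arXiv:2306.04330 — 10 statements merged into one kernel-verified Lean document; each statement's English description precedes it below -/
import Mathlib

section
/- Let r ≥ 2 and let k_1, ..., k_r be positive integers with k_r = min{k_i : 2 ≤ i ≤ r}. For a positive integer n with n ≥ k_1 + k_i for every i ∈ [2, r-1] and n > k_1 + k_r, define g(s) = C(n,k_1) - C(n-s,k_1) + Σ_{i=2}^{r} C(n-s, k_i - s) for 1 ≤ s ≤ k_r. Then max{g(s) : 1 ≤ s ≤ k_r} equals g(1) or g(k_r). -/
/-!
Write `m = n - t - 1`. By Pascal's rule and symmetry,
`g (t + 1) - g t = C(m, k₁ - 1) - ∑ᵢ C(m, n - kᵢ - 1)`, and `k₁ - 1 ≤ n - kᵢ - 1`.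
Since `C(m, b) / C(m + 1, b) = (m + 1 - b) / (m + 1)` decreases in `b`, once this increment is
nonnegative it stays nonnegative as `t` grows. So `g` first decreases and then increases on
`[1, k_r]`, and its maximum there is attained at an endpoint.
-/

open Finset

theorem le_max_of_increments_persist {α : Type*} [LinearOrder α] {f : ℕ → α} {a b : ℕ}
    (hf : ∀ t, a ≤ t → t + 2 ≤ b → f t ≤ f (t + 1) → f (t + 1) ≤ f (t + 2))
    {s : ℕ} (has : a ≤ s) (hsb : s ≤ b) : f s ≤ max (f a) (f b) := by
  by_cases hup : ∃ t, a ≤ t ∧ t < s ∧ f t ≤ f (t + 1)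
  · obtain ⟨t, hat, hts, ht⟩ := hup
    have hstep : ∀ u, t ≤ u → u < b → f u ≤ f (u + 1) := by
      intro u htu
      induction u, htu using Nat.le_induction with
      | base => exact fun _ => ht
      | succ u htu ih => exact fun hu => hf u (by omega) (by omega) (ih (by omega))
    have hmono : MonotoneOn f (Set.Icc t b) :=
      monotoneOn_of_le_succ Set.ordConnected_Icc fun u _ hu hu' =>
        hstep u hu.1 (by simpa using hu'.2)
    exact le_max_of_le_right (hmono ⟨hts.le, hsb⟩ ⟨by omega, le_rfl⟩ hsb)
  · push Not at hup
    have hanti : AntitoneOn f (Set.Icc a s) :=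
      antitoneOn_of_succ_le Set.ordConnected_Icc fun u _ hu hu' =>
        (hup u hu.1 (by simpa using hu'.2)).le
    exact le_max_of_le_left (hanti ⟨le_rfl, has⟩ ⟨has, le_rfl⟩ has)

theorem choose_mul_choose_succ_le_of_le {m a b : ℕ} (hab : a ≤ b) :
    m.choose b * (m + 1).choose a ≤ (m + 1).choose b * m.choose a := by
  refine Nat.le_of_mul_le_mul_right ?_ m.succ_pos
  calc m.choose b * (m + 1).choose a * (m + 1)
      = m.choose b * (m + 1) * (m + 1).choose a := by ring
    _ = (m + 1).choose b * (m + 1 - b) * (m + 1).choose a := by rw [Nat.choose_mul_succ_eq]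
    _ ≤ (m + 1).choose b * (m + 1 - a) * (m + 1).choose a := by gcongr
    _ = (m + 1).choose b * m.choose a * (m + 1) := by
      rw [mul_assoc, mul_comm (m + 1 - a), ← Nat.choose_mul_succ_eq]; ring

theorem sum_choose_le_choose_of_succ {ι : Type*} {S : Finset ι} {m a : ℕ} {b : ι → ℕ}
    (hab : ∀ i ∈ S, a ≤ b i) (h : ∑ i ∈ S, (m + 1).choose (b i) ≤ (m + 1).choose a) :
    ∑ i ∈ S, m.choose (b i) ≤ m.choose a := by
  rcases Nat.eq_zero_or_pos ((m + 1).choose a) with h0 | hpos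
  · have ha : m + 1 < a := Nat.choose_eq_zero_iff.1 h0
    rw [sum_eq_zero fun i hi => Nat.choose_eq_zero_of_lt (by have := hab i hi; omega)]
    exact Nat.zero_le _
  · refine Nat.le_of_mul_le_mul_right ?_ hpos
    calc (∑ i ∈ S, m.choose (b i)) * (m + 1).choose a
        ≤ (∑ i ∈ S, (m + 1).choose (b i)) * m.choose a := by
          simp only [sum_mul]
          exact sum_le_sum fun i hi => choose_mul_choose_succ_le_of_le (hab i hi)
      _ ≤ (m + 1).choose a * m.choose a := by gcongr
      _ = m.choose a * (m + 1).choose a := mul_comm _ _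

def kernelSum {ι : Type*} (n k₁ : ℕ) (S : Finset ι) (k : ι → ℕ) (s : ℕ) : ℕ :=
  n.choose k₁ - (n - s).choose k₁ + ∑ i ∈ S, (n - s).choose (k i - s)

section kernelSum

variable {ι : Type*} {n k₁ t : ℕ} {S : Finset ι} {k : ι → ℕ}

theorem kernelSum_succ_add (hk₁ : 0 < k₁) (hS : ∀ i ∈ S, t < k i ∧ k₁ + k i ≤ n)
    (ht : t < n) :
    kernelSum n k₁ S k (t + 1) + ∑ i ∈ S, (n - t - 1).choose (n - k i - 1)
      = kernelSum n k₁ S k t + (n - t - 1).choose (k₁ - 1) := by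
  set m := n - t - 1
  have hpascal₁ : (m + 1).choose k₁ = m.choose (k₁ - 1) + m.choose k₁ := by
    simpa [Nat.sub_add_cancel hk₁] using Nat.choose_succ_succ' m (k₁ - 1)
  have hpascal : ∀ i ∈ S,
      (m + 1).choose (k i - t) = m.choose (k i - (t + 1)) + m.choose (n - k i - 1) := by
    intro i hi
    obtain ⟨hti, hki⟩ := hS i hi
    rw [show k i - t = k i - (t + 1) + 1 by omega, Nat.choose_succ_succ',
      Nat.choose_symm_of_eq_add (show m = k i - (t + 1) + 1 + (n - k i - 1) by omega)]
  have hle₁ : (m + 1).choose k₁ ≤ n.choose k₁ := Nat.choose_le_choose _ (by omega)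
  have hle₀ : m.choose k₁ ≤ n.choose k₁ := Nat.choose_le_choose _ (by omega)
  unfold kernelSum
  rw [show n - t = m + 1 by omega, show n - (t + 1) = m by omega, sum_congr rfl hpascal,
    sum_add_distrib]
  omega

theorem kernelSum_le_succ_succ (hk₁ : 0 < k₁) (hS : ∀ i ∈ S, t + 2 ≤ k i ∧ k₁ + k i ≤ n)
    (ht : t + 1 < n) (h : kernelSum n k₁ S k t ≤ kernelSum n k₁ S k (t + 1)) :
    kernelSum n k₁ S k (t + 1) ≤ kernelSum n k₁ S k (t + 2) := by
  have e₀ := kernelSum_succ_add (k := k) hk₁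
    (fun i hi => ⟨by have := (hS i hi).1; omega, (hS i hi).2⟩) (by omega : t < n)
  have e₁ := kernelSum_succ_add (k := k) (t := t + 1) hk₁
    (fun i hi => ⟨by have := (hS i hi).1; omega, (hS i hi).2⟩) ht
  have hab : ∀ i ∈ S, k₁ - 1 ≤ n - k i - 1 := fun i hi => by have := (hS i hi).2; omega
  have h₀ : ∑ i ∈ S, (n - (t + 1) - 1 + 1).choose (n - k i - 1)
      ≤ (n - (t + 1) - 1 + 1).choose (k₁ - 1) := by
    rw [show n - (t + 1) - 1 + 1 = n - t - 1 by omega]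
    linarith
  have h₁ := sum_choose_le_choose_of_succ hab h₀
  linarith

end kernelSum

theorem stmt_4_general (r n : ℕ) (k : ℕ → ℕ) (hr : 2 ≤ r)
    (hkpos : ∀ i ∈ Finset.Icc 1 r, 0 < k i)
    (hmin : ∀ i ∈ Finset.Icc 2 r, k r ≤ k i)
    (hni : ∀ i ∈ Finset.Icc 2 (r - 1), k 1 + k i ≤ n)
    (hnr : k 1 + k r < n)
    (g : ℕ → ℕ)
    (hg : ∀ s, g s = n.choose (k 1) - (n - s).choose (k 1)
        + ∑ i ∈ Finset.Icc 2 r, (n - s).choose (k i - s)) :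
    ∀ s, 1 ≤ s → s ≤ k r → g s ≤ max (g 1) (g (k r)) := by
  intro s hs₁ hs
  have hk₁ : 0 < k 1 := hkpos 1 (mem_Icc.2 ⟨le_rfl, by omega⟩)
  have hbound : ∀ i ∈ Icc 2 r, k r ≤ k i ∧ k 1 + k i ≤ n := by
    intro i hi
    refine ⟨hmin i hi, ?_⟩
    obtain ⟨hi₂, hir⟩ := mem_Icc.1 hi
    rcases hir.eq_or_lt with rfl | hlt
    · exact hnr.le
    · exact hni i (mem_Icc.2 ⟨hi₂, by omega⟩)
  obtain rfl : g = kernelSum n (k 1) (Icc 2 r) k := funext hg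
  exact le_max_of_increments_persist (fun t _ ht => kernelSum_le_succ_succ (t := t) hk₁
    (fun i hi => ⟨ht.trans (hbound i hi).1, (hbound i hi).2⟩) (by omega)) hs₁ hs

theorem stmt_4 (r n : ℕ) (k : ℕ → ℕ) (hr : 2 ≤ r)
    (hkpos : ∀ i ∈ Finset.Icc 1 r, 0 < k i) (hn : 0 < n)
    (hmin : ∀ i ∈ Finset.Icc 2 r, k r ≤ k i)
    (hni : ∀ i ∈ Finset.Icc 2 (r - 1), k 1 + k i ≤ n)
    (hnr : k 1 + k r < n)
    (g : ℕ → ℕ)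
    (hg : ∀ s, g s = n.choose (k 1) - (n - s).choose (k 1)
        + ∑ i ∈ Finset.Icc 2 r, (n - s).choose (k i - s)) :
    ∀ s, 1 ≤ s → s ≤ k r → g s ≤ max (g 1) (g (k r)) :=
  stmt_4_general r n k hr hkpos hmin hni hnr g hg
end

section
/- Let r ≥ 2 and let k_1, ..., k_r be positive integers with k_r = min{k_i : 2 ≤ i ≤ r} and k_r ≥ 3. Let n satisfy n ≥ k_1 + k_i for all i ∈ [2, r-1] and n > k_1 + k_r. Define g(s) = C(n,k_1) - C(n-s,k_1) + Σ_{i=2}^{r} C(n-s, k_i - s). Then there is no s with 2 ≤ s ≤ k_r - 1 such that both g(s) ≥ g(s+1) and g(s) ≥ g(s-1) hold (i.e., g has no interior weak local maximum on [1, k_r]). -/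
/-!
With `m = n - s`, Pascal's rule gives
`g s - g (s + 1) = ∑ᵢ C(m - 1, kᵢ - s) - C(m - 1, k₁ - 1)`, so a weak local maximum at `s` means
`C(m - 1, k₁ - 1) ≤ ∑ᵢ C(m - 1, kᵢ - s)` and `∑ᵢ C(m, kᵢ - s + 1) ≤ C(m, k₁ - 1)`.
Multiplying the first by `m` via `m C(m - 1, j) = (j + 1) C(m, j + 1)` and
`m C(m - 1, k₁ - 1) = (m - k₁ + 1) C(m, k₁ - 1)` yields
`(m - k₁ + 1) C(m, k₁ - 1) ≤ ∑ᵢ (kᵢ - s + 1) C(m, kᵢ - s + 1)`. Since `k₁ + kᵢ ≤ n`, strictly for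
`i = r`, the right side is `< (m - k₁ + 1) ∑ᵢ C(m, kᵢ - s + 1)`, contradicting the second.
-/

open Finset

namespace BinomialProfile

def g (n c : ℕ) (k : ℕ → ℕ) (I : Finset ℕ) (s : ℕ) : ℕ :=
  n.choose c - (n - s).choose c + ∑ i ∈ I, (n - s).choose (k i - s)

theorem g_add_choose_eq {n c s : ℕ} {k : ℕ → ℕ} {I : Finset ℕ} (hc : 0 < c) (hs : s < n)
    (hk : ∀ i ∈ I, s < k i) :
    g n c k I s + (n - (s + 1)).choose (c - 1)
      = g n c k I (s + 1) + ∑ i ∈ I, (n - (s + 1)).choose (k i - s) := by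
  unfold g
  set m := n - (s + 1)
  have hm : n - s = m + 1 := by omega
  have hpascal_c : (m + 1).choose c = m.choose (c - 1) + m.choose c :=
    Nat.choose_eq_choose_pred_add (by omega) hc
  have hpascal_sum : ∑ i ∈ I, (m + 1).choose (k i - s)
      = ∑ i ∈ I, m.choose (k i - (s + 1)) + ∑ i ∈ I, m.choose (k i - s) := by
    rw [← sum_add_distrib]
    refine sum_congr rfl fun i hi => ?_
    rw [Nat.choose_eq_choose_pred_add (by omega) (by have := hk i hi; omega), Nat.sub_sub]
    rfl
  have hle : (m + 1).choose c ≤ n.choose c := Nat.choose_le_choose c (by omega)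
  rw [hm, hpascal_sum]
  omega

theorem not_choose_le_sum_and_sum_le_choose {p d : ℕ} {j : ℕ → ℕ} {I : Finset ℕ}
    (hj : ∀ i ∈ I, j i + d ≤ p) (hstrict : ∃ i ∈ I, j i + d < p)
    (hle : p.choose d ≤ ∑ i ∈ I, p.choose (j i))
    (hge : ∑ i ∈ I, (p + 1).choose (j i + 1) ≤ (p + 1).choose d) : False := by
  have hlt : ∑ i ∈ I, (j i + 1) * (p + 1).choose (j i + 1)
      < ∑ i ∈ I, (p + 1 - d) * (p + 1).choose (j i + 1) := by
    refine sum_lt_sum (fun i hi => Nat.mul_le_mul_right _ (by have := hj i hi; omega)) ?_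
    obtain ⟨i, hi, hlt⟩ := hstrict
    exact ⟨i, hi, Nat.mul_lt_mul_of_pos_right (by omega) (Nat.choose_pos (by omega))⟩
  have := calc (p + 1 - d) * (p + 1).choose d
      = (p + 1) * p.choose d := by rw [mul_comm, ← Nat.choose_mul_succ_eq, mul_comm]
    _ ≤ (p + 1) * ∑ i ∈ I, p.choose (j i) := Nat.mul_le_mul_left _ hle
    _ = ∑ i ∈ I, (j i + 1) * (p + 1).choose (j i + 1) := by
        rw [mul_sum]
        exact sum_congr rfl fun i _ => by rw [Nat.add_one_mul_choose_eq, mul_comm]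
    _ < ∑ i ∈ I, (p + 1 - d) * (p + 1).choose (j i + 1) := hlt
    _ = (p + 1 - d) * ∑ i ∈ I, (p + 1).choose (j i + 1) := by rw [mul_sum]
    _ ≤ (p + 1 - d) * (p + 1).choose d := Nat.mul_le_mul_left _ hge
  exact lt_irrefl _ this

end BinomialProfile

open BinomialProfile

theorem stmt_5_general (r n : ℕ) (k : ℕ → ℕ) (hr : 2 ≤ r)
    (hkpos : ∀ i ∈ Finset.Icc 1 r, 0 < k i)
    (hmin : ∀ i ∈ Finset.Icc 2 r, k r ≤ k i)
    (hni : ∀ i ∈ Finset.Icc 2 (r - 1), k 1 + k i ≤ n)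
    (hnr : k 1 + k r < n)
    (g : ℕ → ℕ)
    (hg : ∀ s, g s = n.choose (k 1) - (n - s).choose (k 1)
        + ∑ i ∈ Finset.Icc 2 r, (n - s).choose (k i - s)) :
    ¬ ∃ s, 2 ≤ s ∧ s ≤ k r - 1 ∧ g (s + 1) ≤ g s ∧ g (s - 1) ≤ g s := by
  rintro ⟨_ | t, hs, hsr, hsucc, hpred⟩
  · omega
  simp only [add_tsub_cancel_right, add_assoc, Nat.reduceAdd] at hsucc hpred
  have hk1 : 0 < k 1 := hkpos 1 (by simp; omega)
  have hk : ∀ i ∈ Icc 2 r, t + 2 ≤ k i := fun i hi => by have := hmin i hi; omega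
  have hgI : ∀ s, g s = BinomialProfile.g n (k 1) k (Icc 2 r) s := hg
  have hstep : g (t + 1) + (n - (t + 2)).choose (k 1 - 1)
      = g (t + 2) + ∑ i ∈ Icc 2 r, (n - (t + 2)).choose (k i - (t + 1)) := by
    simpa only [hgI] using g_add_choose_eq hk1 (s := t + 1) (by omega) fun i hi => hk i hi
  have hprev : g t + (n - (t + 1)).choose (k 1 - 1)
      = g (t + 1) + ∑ i ∈ Icc 2 r, (n - (t + 1)).choose (k i - t) := by
    simpa only [hgI] using
      g_add_choose_eq hk1 (s := t) (by omega) fun i hi => by have := hk i hi; omega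
  have hn : n - (t + 1) = n - (t + 2) + 1 := by omega
  have hshift : ∑ i ∈ Icc 2 r, (n - (t + 1)).choose (k i - t)
      = ∑ i ∈ Icc 2 r, (n - (t + 2) + 1).choose (k i - (t + 1) + 1) :=
    sum_congr rfl fun i hi => by rw [hn]; congr 1; have := hk i hi; omega
  refine not_choose_le_sum_and_sum_le_choose (p := n - (t + 2)) (d := k 1 - 1)
    (j := fun i => k i - (t + 1)) (I := Icc 2 r) ?_ ⟨r, by simp; omega, by omega⟩ (by omega) ?_
  · intro i hi
    have := hk i hi
    rcases eq_or_ne i r with rfl | hir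
    · omega
    · have := hni i (by simp at hi ⊢; omega)
      omega
  · show ∑ i ∈ Icc 2 r, (n - (t + 2) + 1).choose (k i - (t + 1) + 1)
      ≤ (n - (t + 2) + 1).choose (k 1 - 1)
    rw [← hshift, ← hn]
    omega

theorem stmt_5 (r n : ℕ) (k : ℕ → ℕ) (hr : 2 ≤ r)
    (hkpos : ∀ i ∈ Finset.Icc 1 r, 0 < k i) (hn : 0 < n)
    (hmin : ∀ i ∈ Finset.Icc 2 r, k r ≤ k i) (hkr3 : 3 ≤ k r)
    (hni : ∀ i ∈ Finset.Icc 2 (r - 1), k 1 + k i ≤ n)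
    (hnr : k 1 + k r < n)
    (g : ℕ → ℕ)
    (hg : ∀ s, g s = n.choose (k 1) - (n - s).choose (k 1)
        + ∑ i ∈ Finset.Icc 2 r, (n - s).choose (k i - s)) :
    ¬ ∃ s, 2 ≤ s ∧ s ≤ k r - 1 ∧ g (s + 1) ≤ g s ∧ g (s - 1) ≤ g s :=
  stmt_5_general r n k hr hkpos hmin hni hnr g hg
end

section
/- Let r ≥ 2 and n, k_1, ..., k_r be positive integers such that n ≥ k_i + k_j for all 1 ≤ i < j ≤ r. Let k̄ = min{k_i : i ∈ [r], i ≠ 2}. If k_1 > k_2 and k̄ > 1, then Σ_{i=1}^{r} C(n-1, k_i - 1) ≥ C(n, k_2) - C(n-k̄, k_2) + Σ_{i ∈ [r], i ≠ 2} C(n-k̄, k_i - k̄), with equality if and only if r = 2 and n = k_1 + k_2. -/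
/-!
Pascal's rule rewrites `C(n, k₂)` as `C(n-1, k₂-1) + C(n-1, k₂)`, which cancels the term `i = 2`
on the left. Each term `i ≥ 3` satisfies `C(n-k̄, k_i-k̄) < C(n-1, k_i-1)` because `k̄ > 1`.
After the symmetry `C(m, j) = C(m, m-j)`, what remains for `i = 1` is the exchange inequality
`C(u, a) + C(v, b) ≤ C(v, a) + C(u, b)` for `b ≤ a`, `u ≤ v`, taken at `a = n - k₁`, `b = k₂`,
`u = n - k̄`, `v = n - 1`. This holds because `C(w, a) - C(w, b)` increases in `w` from
`w = a + b - 1` on and is nonpositive at smaller `w ≥ a`, by unimodality of binomial coefficients.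
Equality therefore needs both `r = 2` and `a = b`, that is, `n = k₁ + k₂`.
-/

namespace Nat

theorem choose_lt_choose_succ_right {m t : ℕ} (h : 2 * t + 2 ≤ m) :
    m.choose t < m.choose (t + 1) := by
  refine Nat.lt_of_mul_lt_mul_right (a := t + 1) ?_
  rw [choose_succ_right_eq]
  exact mul_lt_mul_of_pos_left (by omega) (choose_pos (by omega))

theorem choose_le_choose_of_le_of_two_mul_le {m a b : ℕ} (hba : b ≤ a) (ha : 2 * a ≤ m) :
    m.choose b ≤ m.choose a := by
  induction a, hba using Nat.le_induction with
  | base => rfl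
  | succ a _ ih => exact (ih (by omega)).trans (choose_le_succ_of_lt_half_left (by omega))

theorem choose_le_choose_of_le_of_add_le {m a b : ℕ} (hba : b ≤ a) (h : a + b ≤ m) :
    m.choose b ≤ m.choose a := by
  rcases le_or_gt (2 * a) m with ha | ha
  · exact choose_le_choose_of_le_of_two_mul_le hba ha
  · rw [choose_symm_of_eq_add (show m = a + (m - a) by omega)]
    exact choose_le_choose_of_le_of_two_mul_le (by omega) (by omega)

theorem choose_lt_choose_of_lt_of_add_lt {m a b : ℕ} (hba : b < a) (h : a + b < m) :
    m.choose b < m.choose a :=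
  (choose_lt_choose_succ_right (by omega)).trans_le
    (choose_le_choose_of_le_of_add_le hba (by omega))

theorem choose_add_choose_lt_choose_add_choose {a b u v : ℕ} (hb : 0 < b) (hba : b < a)
    (hav : a + b ≤ v) (hau : a ≤ u) (huv : u < v) :
    u.choose a + v.choose b < v.choose a + u.choose b := by
  rcases le_or_gt (a + b) (u + 1) with hab | hab
  · obtain ⟨a, rfl⟩ : ∃ a', a = a' + 1 := ⟨a - 1, by omega⟩
    obtain ⟨b, rfl⟩ : ∃ b', b = b' + 1 := ⟨b - 1, by omega⟩
    replace huv : u + 1 ≤ v := huv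
    induction v, huv using Nat.le_induction with
    | base =>
      have hstep : u.choose b < u.choose a := choose_lt_choose_of_lt_of_add_lt (by omega) (by omega)
      rw [choose_succ_succ' u a, choose_succ_succ' u b]
      omega
    | succ v _ ih =>
      have hstep : v.choose b ≤ v.choose a := choose_le_choose_of_le_of_add_le (by omega) (by omega)
      have hprev := ih (by omega)
      rw [choose_succ_succ' v a, choose_succ_succ' v b]
      omega
  · have hu : u.choose a < u.choose b := by
      rw [choose_symm_of_eq_add (show u = a + (u - a) by omega)]
      exact choose_lt_choose_of_lt_of_add_lt (by omega) (by omega)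
    have hv : v.choose b ≤ v.choose a := choose_le_choose_of_le_of_add_le hba.le hav
    omega

theorem choose_sub_add_choose_le {n p q s : ℕ} (hq : 0 < q) (hqp : q < p) (hn : p + q ≤ n)
    (hs : 1 < s) (hsp : s ≤ p) :
    (n - s).choose (p - s) + (n - 1).choose q ≤ (n - 1).choose (p - 1) + (n - s).choose q ∧
      ((n - s).choose (p - s) + (n - 1).choose q = (n - 1).choose (p - 1) + (n - s).choose q ↔
        p + q = n) := by
  rcases hn.lt_or_eq with hn | rfl
  · have := choose_add_choose_lt_choose_add_choose (a := n - p) (b := q) (u := n - s)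
      (v := n - 1) hq (by omega) (by omega) (by omega) (by omega)
    rw [choose_symm_of_eq_add (show n - s = (n - p) + (p - s) by omega),
      choose_symm_of_eq_add (show n - 1 = (n - p) + (p - 1) by omega)] at this
    exact ⟨this.le, by omega⟩
  · rw [choose_symm_of_eq_add (show p + q - s = (p - s) + q by omega),
      choose_symm_of_eq_add (show p + q - 1 = (p - 1) + q by omega)]
    exact ⟨(add_comm _ _).le, iff_of_true (add_comm _ _) rfl⟩

theorem choose_lt_choose_add_add {m c t : ℕ} (ht : 0 < t) (hc : c < m) :
    m.choose c < (m + t).choose (c + t) := by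
  induction t, ht using Nat.le_induction with
  | base =>
    rw [choose_succ_succ']
    have := choose_pos (show c + 1 ≤ m by omega)
    omega
  | succ t _ ih =>
    rw [← add_assoc, ← add_assoc, choose_succ_succ']
    omega

theorem choose_sub_sub_lt_choose_pred_pred {n c s : ℕ} (hs : 1 < s) (hsc : s ≤ c)
    (hcn : c < n) :
    (n - s).choose (c - s) < (n - 1).choose (c - 1) := by
  have := choose_lt_choose_add_add (m := n - s) (c := c - s) (t := s - 1) (by omega) (by omega)
  rwa [show n - s + (s - 1) = n - 1 by omega, show c - s + (s - 1) = c - 1 by omega] at this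

end Nat

namespace Finset

theorem sum_Icc_one_eq_add_add_sum_Icc_three {M : Type*} [AddCommMonoid M] (f : ℕ → M) {r : ℕ}
    (hr : 2 ≤ r) : ∑ i ∈ Icc 1 r, f i = f 1 + f 2 + ∑ i ∈ Icc 3 r, f i := by
  have : Icc 1 r = insert 1 (insert 2 (Icc 3 r)) := by
    ext i
    simp only [mem_Icc, mem_insert]
    omega
  rw [this, sum_insert (by simp), sum_insert (by simp), add_assoc]

theorem sum_filter_Icc_one_ne_two {M : Type*} [AddCommMonoid M] (f : ℕ → M) {r : ℕ}
    (hr : 1 ≤ r) :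
    ∑ i ∈ (Icc 1 r).filter (fun i => i ≠ 2), f i = f 1 + ∑ i ∈ Icc 3 r, f i := by
  have : (Icc 1 r).filter (fun i => i ≠ 2) = insert 1 (Icc 3 r) := by
    ext i
    simp only [mem_filter, mem_Icc, mem_insert]
    omega
  rw [this, sum_insert (by simp)]

end Finset

theorem stmt_6_general (r n : ℕ) (k : ℕ → ℕ) (kb : ℕ) (hr : 2 ≤ r)
    (hkpos : ∀ i ∈ Finset.Icc 1 r, 0 < k i)
    (hnij : ∀ i ∈ Finset.Icc 1 r, ∀ j ∈ Finset.Icc 1 r, i < j → k i + k j ≤ n)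
    (hkb_le : ∀ i ∈ Finset.Icc 1 r, i ≠ 2 → kb ≤ k i)
    (h12 : k 2 < k 1) (hkb1 : 1 < kb) :
    (n.choose (k 2) - (n - kb).choose (k 2)
        + ∑ i ∈ (Finset.Icc 1 r).filter (fun i => i ≠ 2), (n - kb).choose (k i - kb))
      ≤ ∑ i ∈ Finset.Icc 1 r, (n - 1).choose (k i - 1)
    ∧ ((∑ i ∈ Finset.Icc 1 r, (n - 1).choose (k i - 1)
        = n.choose (k 2) - (n - kb).choose (k 2)
          + ∑ i ∈ (Finset.Icc 1 r).filter (fun i => i ≠ 2), (n - kb).choose (k i - kb))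
        ↔ r = 2 ∧ n = k 1 + k 2) := by
  have mem : ∀ i, 1 ≤ i → i ≤ r → i ∈ Finset.Icc 1 r :=
    fun i h1 h2 => Finset.mem_Icc.2 ⟨h1, h2⟩
  have h1 := mem 1 le_rfl (by omega)
  have h2 := mem 2 (by norm_num) hr
  have hk2 := hkpos 2 h2
  have tail_lt : ∀ i ∈ Finset.Icc 3 r,
      (n - kb).choose (k i - kb) < (n - 1).choose (k i - 1) := by
    intro i hi
    obtain ⟨h3i, hir⟩ := Finset.mem_Icc.1 hi
    have hkbi := hkb_le i (mem i (by omega) hir) (by omega)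
    have hk2i := hnij 2 h2 i (mem i (by omega) hir) (by omega)
    exact Nat.choose_sub_sub_lt_choose_pred_pred hkb1 hkbi (by omega)
  have hk12 := hnij 1 h1 2 h2 one_lt_two
  obtain ⟨head_le, head_eq⟩ :=
    Nat.choose_sub_add_choose_le hk2 h12 hk12 hkb1 (hkb_le 1 h1 (by norm_num))
  have tail_le := Finset.sum_le_sum fun i hi => (tail_lt i hi).le
  have pascal := Nat.choose_eq_choose_pred_add (by omega) hk2 (n := n)
  have shrink := Nat.choose_le_choose (k 2) (n.sub_le kb)
  rw [Finset.sum_Icc_one_eq_add_add_sum_Icc_three _ hr,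
    Finset.sum_filter_Icc_one_ne_two _ (by omega)]
  refine ⟨by omega, fun heq => ⟨?_, (head_eq.1 (by omega)).symm⟩, fun ⟨hr2, hn⟩ => ?_⟩
  · by_contra hr2
    have := Finset.sum_lt_sum_of_nonempty ⟨3, Finset.mem_Icc.2 ⟨le_rfl, by omega⟩⟩ tail_lt
    omega
  · have := head_eq.2 hn.symm
    rw [Finset.Icc_eq_empty (by omega), Finset.sum_empty, Finset.sum_empty]
    omega

theorem stmt_6 (r n : ℕ) (k : ℕ → ℕ) (kb : ℕ) (hr : 2 ≤ r) (hn : 0 < n)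
    (hkpos : ∀ i ∈ Finset.Icc 1 r, 0 < k i)
    (hnij : ∀ i ∈ Finset.Icc 1 r, ∀ j ∈ Finset.Icc 1 r, i < j → k i + k j ≤ n)
    (hkb_le : ∀ i ∈ Finset.Icc 1 r, i ≠ 2 → kb ≤ k i)
    (hkb_mem : ∃ i ∈ Finset.Icc 1 r, i ≠ 2 ∧ k i = kb)
    (h12 : k 2 < k 1) (hkb1 : 1 < kb) :
    (n.choose (k 2) - (n - kb).choose (k 2)
        + ∑ i ∈ (Finset.Icc 1 r).filter (fun i => i ≠ 2), (n - kb).choose (k i - kb))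
      ≤ ∑ i ∈ Finset.Icc 1 r, (n - 1).choose (k i - 1)
    ∧ ((∑ i ∈ Finset.Icc 1 r, (n - 1).choose (k i - 1)
        = n.choose (k 2) - (n - kb).choose (k 2)
          + ∑ i ∈ (Finset.Icc 1 r).filter (fun i => i ≠ 2), (n - kb).choose (k i - kb))
        ↔ r = 2 ∧ n = k 1 + k 2) :=
  stmt_6_general r n k kb hr hkpos hnij hkb_le h12 hkb1
end

section
/- Let n, k_1, k_2 be positive integers with n ≥ k_1 + k_2, k_1 > k_2, and k_1 > 1. Then C(n-1, k_1 - 1) + C(n-1, k_2 - 1) ≥ C(n, k_2) - C(n - k_1, k_2) + 1, with equality if and only if n = k_1 + k_2. -/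
/-!
Pascal's rule peels `C(n-1, k₂-1)` off `C(n, k₂)`, reducing the claim to
`C(n-1, k₂) - C(n-k₁, k₂) + 1 ≤ C(n-1, k₁-1)`. By unimodality `C(n-1, k₂) ≤ C(n-1, k₁-1)`, and
`C(n-k₁, k₂) ≥ 1`. Equality forces `C(n-k₁, k₂) = 1`, i.e. `n - k₁ = k₂`; conversely, for
`n = k₁ + k₂` both steps are equalities, the first by the symmetry `C(n-1, k₂) = C(n-1, n-1-k₂)`.
-/

namespace Nat

theorem choose_le_choose_of_le_of_le_half {N j l : ℕ} (hjl : j ≤ l) (hl : l ≤ N / 2) :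
    N.choose j ≤ N.choose l := by
  induction l, hjl using Nat.le_induction with
  | base => rfl
  | succ l _ ih => exact (ih (by omega)).trans (choose_le_succ_of_lt_half_left (by omega))

theorem choose_le_choose_of_le_of_add_le_s7 {N j l : ℕ} (hjl : j ≤ l) (hN : j + l ≤ N) :
    N.choose j ≤ N.choose l := by
  rcases le_or_gt l (N / 2) with hl | hl
  · exact choose_le_choose_of_le_of_le_half hjl hl
  · rw [← choose_symm (by omega : l ≤ N)]
    exact choose_le_choose_of_le_of_le_half (by omega) (by omega)

end Nat

theorem stmt_7_general (n k₁ k₂ : ℕ) (hk₂ : 0 < k₂) (h12 : k₂ < k₁)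
    (hn : k₁ + k₂ ≤ n) :
    n.choose k₂ - (n - k₁).choose k₂ + 1 ≤ (n - 1).choose (k₁ - 1) + (n - 1).choose (k₂ - 1)
    ∧ ((n - 1).choose (k₁ - 1) + (n - 1).choose (k₂ - 1)
        = n.choose k₂ - (n - k₁).choose k₂ + 1 ↔ n = k₁ + k₂) := by
  have pascal : n.choose k₂ = (n - 1).choose (k₂ - 1) + (n - 1).choose k₂ := by
    obtain ⟨m, rfl⟩ : ∃ m, n = m + 1 := ⟨n - 1, by omega⟩
    exact Nat.choose_succ_left m k₂ hk₂
  have unimodal : (n - 1).choose k₂ ≤ (n - 1).choose (k₁ - 1) :=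
    Nat.choose_le_choose_of_le_of_add_le_s7 (by omega) (by omega)
  have tail_pos : 0 < (n - k₁).choose k₂ := Nat.choose_pos (by omega)
  have tail_le : (n - k₁).choose k₂ ≤ (n - 1).choose k₂ := Nat.choose_le_choose _ (by omega)
  have tail_eq_one : (n - k₁).choose k₂ = 1 ↔ n = k₁ + k₂ := by
    rw [Nat.choose_eq_one_iff]; omega
  have symm_of_eq : n = k₁ + k₂ → (n - 1).choose k₂ = (n - 1).choose (k₁ - 1) := by
    rintro rfl
    rw [← Nat.choose_symm (by omega : k₂ ≤ k₁ + k₂ - 1)]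
    congr 1; omega
  rw [pascal]
  omega

theorem stmt_7 (n k₁ k₂ : ℕ) (hk₂ : 0 < k₂) (hk₁ : 1 < k₁) (h12 : k₂ < k₁)
    (hn : k₁ + k₂ ≤ n) :
    n.choose k₂ - (n - k₁).choose k₂ + 1 ≤ (n - 1).choose (k₁ - 1) + (n - 1).choose (k₂ - 1)
    ∧ ((n - 1).choose (k₁ - 1) + (n - 1).choose (k₂ - 1)
        = n.choose k₂ - (n - k₁).choose k₂ + 1 ↔ n = k₁ + k₂) :=
  stmt_7_general n k₁ k₂ hk₂ h12 hn
end

section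
/- Let n, k, l be positive integers with n ≥ 2k. If F_1 ⊆ C([n],k) and F_2 ⊆ C([n],k) are non-empty cross-intersecting families, then |F_1| + |F_2| ≤ C(n,k) - C(n-k,k) + 1. -/
/-!
Shifting towards a point `a` (the UV-compressions `𝓒 {j} {a}`) keeps two families
cross-intersecting and keeps their sizes, so we may assume both are stable under all these shifts.
Split each family into the sets avoiding `a` and the traces `A \ {a}` of the sets containing `a`.
The avoiding parts are non-empty and cross-intersecting on the smaller ground set, and by
shiftedness so are the two trace families when neither is empty; if one of them is empty, the
other one has to meet a fixed set avoiding `a`, which bounds it by `C(n-1,k-1) - C(n-k-1,k-1)`.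
Pascal's rule closes the induction on the ground set. In the base case `n = 2k` the complements
of the sets of one family avoid the other family, so `|F₁| + |F₂| ≤ C(2k,k)`.
-/

open Finset UV
open scoped FinsetFamily

variable {α : Type*} [DecidableEq α] {𝒜 ℬ 𝒞 𝒟 : Finset (Finset α)} {s u v A B : Finset α}
  {a j : α} {k l : ℕ}

namespace UV

lemma compress_singleton_of_mem_of_notMem (haA : a ∈ A) (hjA : j ∉ A) :
    compress {j} {a} A = insert j (A.erase a) := by
  rw [compress_of_disjoint_of_le (disjoint_singleton_left.2 hjA) (singleton_subset_iff.2 haA)]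
  ext x
  simp only [sup_eq_union, mem_sdiff, mem_union, mem_singleton, mem_insert, mem_erase]
  grind

lemma compress_singleton_eq_self (h : ¬(a ∈ A ∧ j ∉ A)) : compress {j} {a} A = A := by
  rw [compress, if_neg (by simpa [and_comm] using h)]

lemma subset_of_compress_ne (h : compress u v A ≠ A) : v ⊆ A := by
  unfold compress at h
  split_ifs at h with huv
  exacts [huv.2, absurd rfl h]

lemma insert_mem_of_isCompressed (h : IsCompressed {j} {a} 𝒜) (hA : insert a A ∈ 𝒜)
    (haA : a ∉ A) (hjA : j ∉ A) : insert j A ∈ 𝒜 := by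
  obtain rfl | hja := eq_or_ne j a
  · exact hA
  have := compress_mem_compression (u := {j}) (v := {a}) hA
  rwa [h.eq, compress_singleton_of_mem_of_notMem (mem_insert_self a A)
    (by simp [hja, hjA]), erase_insert haA] at this

lemma filter_mem_compression_subset (ha : a ∈ v) :
    {A ∈ 𝓒 u v 𝒜 | a ∈ A} ⊆ {A ∈ 𝒜 | a ∈ A} := by
  intro B hB
  rw [mem_filter] at hB ⊢
  refine ⟨?_, hB.2⟩
  by_contra hB𝒜
  exact disjoint_left.1 (disjoint_of_mem_compression_of_notMem hB.1 hB𝒜) ha hB.2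

lemma card_filter_mem_compression_lt (ha : a ∈ v) (h : ¬IsCompressed u v 𝒜) :
    #{A ∈ 𝓒 u v 𝒜 | a ∈ A} < #{A ∈ 𝒜 | a ∈ A} := by
  refine card_lt_card ⟨filter_mem_compression_subset ha, fun hsub => ?_⟩
  obtain ⟨A, hA, hcA⟩ : ∃ A ∈ 𝒜, compress u v A ∉ 𝒜 := by
    by_contra! hall
    exact h (by ext B; grind [mem_compression])
  have haA : a ∈ A := subset_of_compress_ne (fun hA' => hcA (hA' ▸ hA)) ha
  have := hsub (mem_filter.2 ⟨hA, haA⟩)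
  grind [mem_compression]

lemma compression_subset_powersetCard (hj : j ∈ s) (h𝒜 : 𝒜 ⊆ s.powersetCard k) :
    𝓒 {j} {a} 𝒜 ⊆ s.powersetCard k := by
  intro B hB
  rw [mem_compression] at hB
  obtain ⟨hB, -⟩ | ⟨-, A, hA, rfl⟩ := hB
  · exact h𝒜 hB
  obtain ⟨hAs, hAk⟩ := mem_powersetCard.1 (h𝒜 hA)
  refine mem_powersetCard.2 ⟨?_, by rw [card_compress (by simp), hAk]⟩
  by_cases hjA : a ∈ A ∧ j ∉ A
  · rw [compress_singleton_of_mem_of_notMem hjA.1 hjA.2]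
    exact insert_subset hj ((erase_subset _ _).trans hAs)
  · rwa [compress_singleton_eq_self hjA]

end UV

namespace Finset

lemma nonMemberSubfamily_subset_powersetCard (h𝒜 : 𝒜 ⊆ (insert a s).powersetCard k) :
    𝒜.nonMemberSubfamily a ⊆ s.powersetCard k := by
  intro A hA
  rw [mem_nonMemberSubfamily] at hA
  obtain ⟨hAs, hAk⟩ := mem_powersetCard.1 (h𝒜 hA.1)
  exact mem_powersetCard.2 ⟨(subset_insert_iff_of_notMem hA.2).1 hAs, hAk⟩

lemma memberSubfamily_subset_powersetCard (h𝒜 : 𝒜 ⊆ (insert a s).powersetCard (k + 1)) :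
    𝒜.memberSubfamily a ⊆ s.powersetCard k := by
  intro A hA
  rw [mem_memberSubfamily] at hA
  obtain ⟨hAs, hAk⟩ := mem_powersetCard.1 (h𝒜 hA.1)
  rw [card_insert_of_notMem hA.2] at hAk
  exact mem_powersetCard.2
    ⟨(subset_insert_iff_of_notMem hA.2).1 ((subset_insert a A).trans hAs), by omega⟩

lemma nonMemberSubfamily_nonempty (hshift : ∀ j ∈ s, IsCompressed {j} {a} 𝒜) (ha : a ∉ s)
    (h𝒜 : 𝒜.memberSubfamily a ⊆ s.powersetCard k) (hk : k < #s) (hne : 𝒜.Nonempty) :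
    (𝒜.nonMemberSubfamily a).Nonempty := by
  obtain ⟨A, hA⟩ := hne
  by_cases haA : a ∈ A
  case neg => exact ⟨A, mem_nonMemberSubfamily.2 ⟨hA, haA⟩⟩
  have hA' : A.erase a ∈ 𝒜.memberSubfamily a := by simpa [insert_erase haA] using hA
  obtain ⟨hAs, hAk⟩ := mem_powersetCard.1 (h𝒜 hA')
  obtain ⟨j, hj, hjA⟩ := exists_mem_notMem_of_card_lt_card (hAk ▸ hk)
  rw [mem_memberSubfamily] at hA'
  exact ⟨_, mem_nonMemberSubfamily.2
    ⟨insert_mem_of_isCompressed (hshift j hj) hA'.1 hA'.2 hjA, by grind⟩⟩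

def CrossIntersecting (𝒜 ℬ : Finset (Finset α)) : Prop :=
  ∀ A ∈ 𝒜, ∀ B ∈ ℬ, (A ∩ B).Nonempty

namespace CrossIntersecting

lemma symm (h : CrossIntersecting 𝒜 ℬ) : CrossIntersecting ℬ 𝒜 :=
  fun B hB A hA => inter_comm A B ▸ h A hA B hB

lemma mono (h : CrossIntersecting 𝒜 ℬ) (h𝒞 : 𝒞 ⊆ 𝒜) (h𝒟 : 𝒟 ⊆ ℬ) : CrossIntersecting 𝒞 𝒟 :=
  fun A hA B hB => h A (h𝒞 hA) B (h𝒟 hB)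

lemma card_add_card_le_choose (h : CrossIntersecting 𝒜 ℬ) (h𝒜 : 𝒜 ⊆ s.powersetCard k)
    (hℬ : ℬ ⊆ s.powersetCard l) (hs : #s = k + l) : #𝒜 + #ℬ ≤ (#s).choose k := by
  have hcompl : ℬ.image (s \ ·) ⊆ s.powersetCard k := by
    simp only [image_subset_iff, mem_powersetCard]
    intro B hB
    obtain ⟨hBs, hBl⟩ := mem_powersetCard.1 (hℬ hB)
    exact ⟨sdiff_subset, by rw [card_sdiff_of_subset hBs]; omega⟩
  have hdisj : Disjoint 𝒜 (ℬ.image (s \ ·)) := by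
    simp only [disjoint_left, mem_image, not_exists, not_and]
    rintro A hA B hB rfl
    obtain ⟨x, hx⟩ := h _ hA B hB
    simp_all
  have hinj : Set.InjOn (s \ ·) ℬ := fun B hB C hC hBC => by
    rw [← sdiff_sdiff_eq_self (mem_powersetCard.1 (hℬ hB)).1,
      ← sdiff_sdiff_eq_self (mem_powersetCard.1 (hℬ hC)).1]
    exact congrArg (s \ ·) hBC
  calc #𝒜 + #ℬ = #(𝒜 ∪ ℬ.image (s \ ·)) := by
        rw [card_union_of_disjoint hdisj, card_image_of_injOn hinj]
    _ ≤ #(s.powersetCard k) := card_le_card (union_subset h𝒜 hcompl)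
    _ = (#s).choose k := card_powersetCard _ _

lemma card_add_choose_le_choose (h : CrossIntersecting {A} ℬ) (hA : A ⊆ s)
    (hℬ : ℬ ⊆ s.powersetCard k) : #ℬ + (#s - #A).choose k ≤ (#s).choose k := by
  have hdisj : Disjoint ℬ ((s \ A).powersetCard k) := by
    refine disjoint_left.2 fun B hB hB' => ?_
    obtain ⟨x, hx⟩ := h A (mem_singleton_self A) B hB
    have := (mem_powersetCard.1 hB').1 (mem_inter.1 hx).2
    simp_all
  calc #ℬ + (#s - #A).choose k = #(ℬ ∪ (s \ A).powersetCard k) := by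
        rw [card_union_of_disjoint hdisj, card_powersetCard, card_sdiff_of_subset hA]
    _ ≤ #(s.powersetCard k) := card_le_card (union_subset hℬ (powersetCard_mono sdiff_subset))
    _ = (#s).choose k := card_powersetCard _ _

lemma inter_compress_nonempty (h : CrossIntersecting 𝒜 ℬ) (hA : A ∈ 𝒜)
    (hcA : compress {j} {a} A ∈ 𝒜) (hB : B ∈ ℬ) : (A ∩ compress {j} {a} B).Nonempty := by
  by_cases hB' : a ∈ B ∧ j ∉ B
  case neg =>
    rw [compress_singleton_eq_self hB']
    exact h A hA B hB
  rw [compress_singleton_of_mem_of_notMem hB'.1 hB'.2]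
  obtain ⟨x, hx⟩ := h A hA B hB
  by_cases hxa : x = a
  case neg => exact ⟨x, by simp_all⟩
  by_cases hjA : j ∈ A
  · exact ⟨j, by simp_all⟩
  -- `B` meets the shifted set `insert j (A.erase a)`, and not in `j`
  rw [compress_singleton_of_mem_of_notMem (hxa ▸ (mem_inter.1 hx).1) hjA] at hcA
  obtain ⟨y, hy⟩ := h _ hcA B hB
  exact ⟨y, by grind⟩

lemma compression (h : CrossIntersecting 𝒜 ℬ) :
    CrossIntersecting (𝓒 {j} {a} 𝒜) (𝓒 {j} {a} ℬ) := by
  intro A hA B hB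
  rw [mem_compression] at hA hB
  obtain ⟨hA, hcA⟩ | ⟨hA, A₀, hA₀, rfl⟩ := hA <;>
    obtain ⟨hB, hcB⟩ | ⟨hB, B₀, hB₀, rfl⟩ := hB
  · exact h A hA B hB
  · exact h.inter_compress_nonempty hA hcA hB₀
  · exact inter_comm B _ ▸ h.symm.inter_compress_nonempty hB hcB hA₀
  · have hjA := le_of_mem_compression_of_notMem (compress_mem_compression hA₀) hA
    have hjB := le_of_mem_compression_of_notMem (compress_mem_compression hB₀) hB
    exact ⟨j, mem_inter.2 ⟨singleton_subset_iff.1 hjA, singleton_subset_iff.1 hjB⟩⟩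

lemma exists_isCompressed (h : CrossIntersecting 𝒜 ℬ) (h𝒜 : 𝒜 ⊆ s.powersetCard k)
    (hℬ : ℬ ⊆ s.powersetCard k) (a : α) :
    ∃ 𝒞 𝒟, CrossIntersecting 𝒞 𝒟 ∧ 𝒞 ⊆ s.powersetCard k ∧ 𝒟 ⊆ s.powersetCard k ∧
      #𝒞 = #𝒜 ∧ #𝒟 = #ℬ ∧ ∀ j ∈ s, IsCompressed {j} {a} 𝒞 ∧ IsCompressed {j} {a} 𝒟 := by
  induction hm : #{A ∈ 𝒜 | a ∈ A} + #{B ∈ ℬ | a ∈ B} using Nat.strong_induction_on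
    generalizing 𝒜 ℬ with
  | _ m ih =>
  by_cases hc : ∀ j ∈ s, IsCompressed {j} {a} 𝒜 ∧ IsCompressed {j} {a} ℬ
  · exact ⟨𝒜, ℬ, h, h𝒜, hℬ, rfl, rfl, hc⟩
  obtain ⟨j, hj, hc⟩ : ∃ j ∈ s, ¬IsCompressed {j} {a} 𝒜 ∨ ¬IsCompressed {j} {a} ℬ := by
    simpa only [not_forall, not_and_or, exists_prop] using hc
  have ha := mem_singleton_self a
  have hlt : #{A ∈ 𝓒 {j} {a} 𝒜 | a ∈ A} + #{B ∈ 𝓒 {j} {a} ℬ | a ∈ B} < m := by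
    obtain hc | hc := hc
    · exact hm ▸ add_lt_add_of_lt_of_le (card_filter_mem_compression_lt ha hc)
        (card_le_card (filter_mem_compression_subset ha))
    · exact hm ▸ add_lt_add_of_le_of_lt (card_le_card (filter_mem_compression_subset ha))
        (card_filter_mem_compression_lt ha hc)
  obtain ⟨𝒞, 𝒟, h𝒞𝒟, h𝒞, h𝒟, hc𝒞, hc𝒟, hcomp⟩ := ih _ hlt h.compression
    (compression_subset_powersetCard hj h𝒜) (compression_subset_powersetCard hj hℬ) rfl
  exact ⟨𝒞, 𝒟, h𝒞𝒟, h𝒞, h𝒟, hc𝒞.trans (card_compression _ _ _),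
    hc𝒟.trans (card_compression _ _ _), hcomp⟩

lemma nonMemberSubfamily_memberSubfamily (h : CrossIntersecting 𝒜 ℬ) :
    CrossIntersecting (𝒜.nonMemberSubfamily a) (ℬ.memberSubfamily a) := by
  intro A hA B hB
  rw [mem_nonMemberSubfamily] at hA
  rw [mem_memberSubfamily] at hB
  obtain ⟨x, hx⟩ := h A hA.1 _ hB.1
  exact ⟨x, by grind⟩

lemma memberSubfamily (h : CrossIntersecting 𝒜 ℬ) (hshift : ∀ j ∈ s, IsCompressed {j} {a} 𝒜)
    (ha : a ∉ s) (h𝒜 : 𝒜.memberSubfamily a ⊆ s.powersetCard k)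
    (hℬ : ℬ.memberSubfamily a ⊆ s.powersetCard l) (hs : k + l < #s) :
    CrossIntersecting (𝒜.memberSubfamily a) (ℬ.memberSubfamily a) := by
  intro A hA B hB
  obtain ⟨hAs, hAk⟩ := mem_powersetCard.1 (h𝒜 hA)
  obtain ⟨hBs, hBl⟩ := mem_powersetCard.1 (hℬ hB)
  obtain ⟨j, hj, hjAB⟩ := exists_mem_notMem_of_card_lt_card
    ((card_union_le A B).trans_lt (hAk ▸ hBl ▸ hs))
  rw [mem_memberSubfamily] at hA hB
  have hjA := insert_mem_of_isCompressed (hshift j hj) hA.1 hA.2 (by grind)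
  -- `insert j A` meets `insert a B`, neither in `j` nor in `a`
  obtain ⟨x, hx⟩ := h _ hjA _ hB.1
  exact ⟨x, by grind⟩

lemma card_memberSubfamily_add_choose_le (h : CrossIntersecting 𝒜 ℬ)
    (h𝒜 : 𝒜 ⊆ (insert a s).powersetCard (k + 1)) (hℬ : ℬ ⊆ (insert a s).powersetCard (k + 1))
    (hne : (𝒜.nonMemberSubfamily a).Nonempty) :
    #(ℬ.memberSubfamily a) + (#s - (k + 1)).choose k ≤ (#s).choose k := by
  obtain ⟨A, hA⟩ := hne
  obtain ⟨hAs, hAk⟩ := mem_powersetCard.1 (nonMemberSubfamily_subset_powersetCard h𝒜 hA)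
  have hAℬ := h.nonMemberSubfamily_memberSubfamily.mono (singleton_subset_iff.2 hA) subset_rfl
  simpa [hAk] using card_add_choose_le_choose hAℬ hAs (memberSubfamily_subset_powersetCard hℬ)

lemma card_memberSubfamily_add_card_memberSubfamily_add_choose_le (h : CrossIntersecting 𝒜 ℬ)
    (h𝒜 : 𝒜 ⊆ (insert a s).powersetCard (k + 1)) (hℬ : ℬ ⊆ (insert a s).powersetCard (k + 1))
    (h𝒜₀ : (𝒜.nonMemberSubfamily a).Nonempty) (hℬ₀ : (ℬ.nonMemberSubfamily a).Nonempty)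
    (hs : 2 * k < #s)
    (hbound : (𝒜.memberSubfamily a).Nonempty → (ℬ.memberSubfamily a).Nonempty →
      #(𝒜.memberSubfamily a) + #(ℬ.memberSubfamily a) + (#s - k).choose k ≤ (#s).choose k + 1) :
    #(𝒜.memberSubfamily a) + #(ℬ.memberSubfamily a) + (#s - (k + 1)).choose k ≤
      (#s).choose k := by
  obtain h𝒜₁ | h𝒜₁ := (𝒜.memberSubfamily a).eq_empty_or_nonempty
  · simpa [h𝒜₁] using h.card_memberSubfamily_add_choose_le h𝒜 hℬ h𝒜₀
  obtain hℬ₁ | hℬ₁ := (ℬ.memberSubfamily a).eq_empty_or_nonempty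
  · simpa [hℬ₁] using h.symm.card_memberSubfamily_add_choose_le hℬ h𝒜 hℬ₀
  have hbound := hbound h𝒜₁ hℬ₁
  have := card_pos.2 h𝒜₁
  have := card_pos.2 hℬ₁
  rw [show #s - k = #s - (k + 1) + 1 by omega] at hbound
  obtain _ | k := k
  · simp only [Nat.choose_zero_right] at hbound
    omega
  · rw [Nat.choose_succ_succ'] at hbound
    have := Nat.choose_pos (show k ≤ #s - (k + 1 + 1) by omega)
    omega

lemma pos_of_subset_powersetCard (h : CrossIntersecting 𝒜 ℬ) (h𝒜 : 𝒜 ⊆ s.powersetCard k)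
    (h𝒜₀ : 𝒜.Nonempty) (hℬ₀ : ℬ.Nonempty) : 0 < k := by
  obtain ⟨A, hA⟩ := h𝒜₀
  obtain ⟨B, hB⟩ := hℬ₀
  rw [← (mem_powersetCard.1 (h𝒜 hA)).2, card_pos]
  exact (h A hA B hB).mono inter_subset_left

lemma card_add_card_add_choose_le_of_card_eq (h : CrossIntersecting 𝒜 ℬ)
    (h𝒜 : 𝒜 ⊆ s.powersetCard k) (hℬ : ℬ ⊆ s.powersetCard k) (hs : #s = 2 * k) :
    #𝒜 + #ℬ + (#s - k).choose k ≤ (#s).choose k + 1 := by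
  have := h.card_add_card_le_choose h𝒜 hℬ (by omega)
  rw [show #s - k = k by omega, Nat.choose_self]
  omega

theorem card_add_card_add_choose_le (h : CrossIntersecting 𝒜 ℬ) (h𝒜 : 𝒜 ⊆ s.powersetCard k)
    (hℬ : ℬ ⊆ s.powersetCard k) (h𝒜₀ : 𝒜.Nonempty) (hℬ₀ : ℬ.Nonempty) (hs : 2 * k ≤ #s) :
    #𝒜 + #ℬ + (#s - k).choose k ≤ (#s).choose k + 1 := by
  induction s using Finset.induction_on generalizing k 𝒜 ℬ with
  | empty => exact h.card_add_card_add_choose_le_of_card_eq h𝒜 hℬ (by simp_all)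
  | insert a s ha ih =>
  obtain hs | hs := hs.eq_or_lt
  · exact h.card_add_card_add_choose_le_of_card_eq h𝒜 hℬ hs.symm
  obtain ⟨k, rfl⟩ := Nat.exists_eq_add_one.2 (h.pos_of_subset_powersetCard h𝒜 h𝒜₀ hℬ₀)
  rw [card_insert_of_notMem ha] at hs ⊢
  obtain ⟨𝒞, 𝒟, h𝒞𝒟, h𝒞, h𝒟, hc𝒞, hc𝒟, hshift⟩ := h.exists_isCompressed h𝒜 hℬ a
  have hshift₁ j (hj : j ∈ s) := (hshift j (mem_insert_of_mem hj)).1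
  have hshift₂ j (hj : j ∈ s) := (hshift j (mem_insert_of_mem hj)).2
  have hQ₁ := memberSubfamily_subset_powersetCard h𝒞
  have hQ₂ := memberSubfamily_subset_powersetCard h𝒟
  have hP₁₀ := nonMemberSubfamily_nonempty hshift₁ ha hQ₁ (by omega)
    (card_pos.1 (hc𝒞 ▸ card_pos.2 h𝒜₀))
  have hP₂₀ := nonMemberSubfamily_nonempty hshift₂ ha hQ₂ (by omega)
    (card_pos.1 (hc𝒟 ▸ card_pos.2 hℬ₀))
  have hP := ih (𝒜 := 𝒞.nonMemberSubfamily a) (ℬ := 𝒟.nonMemberSubfamily a)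
    (h𝒞𝒟.mono (filter_subset _ _) (filter_subset _ _)) (nonMemberSubfamily_subset_powersetCard h𝒞)
    (nonMemberSubfamily_subset_powersetCard h𝒟) hP₁₀ hP₂₀ (by omega)
  have hQ := h𝒞𝒟.card_memberSubfamily_add_card_memberSubfamily_add_choose_le h𝒞 h𝒟 hP₁₀ hP₂₀
    (by omega) fun hQ₁₀ hQ₂₀ =>
      ih (h𝒞𝒟.memberSubfamily hshift₁ ha hQ₁ hQ₂ (by omega)) hQ₁ hQ₂ hQ₁₀ hQ₂₀ (by omega)
  rw [← hc𝒞, ← hc𝒟, ← card_memberSubfamily_add_card_nonMemberSubfamily a 𝒞,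
    ← card_memberSubfamily_add_card_nonMemberSubfamily a 𝒟, Nat.add_sub_add_right,
    show #s - k = #s - (k + 1) + 1 by omega, Nat.choose_succ_succ', Nat.choose_succ_succ']
  omega

end CrossIntersecting

end Finset

theorem stmt_9_general (n k : ℕ) (hn : 2 * k ≤ n)
    (F₁ F₂ : Finset (Finset ℕ))
    (hF₁ : F₁ ⊆ (Finset.Icc 1 n).powersetCard k)
    (hF₂ : F₂ ⊆ (Finset.Icc 1 n).powersetCard k)
    (hne₁ : F₁.Nonempty) (hne₂ : F₂.Nonempty)
    (hcross : ∀ A ∈ F₁, ∀ B ∈ F₂, (A ∩ B).Nonempty) :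
    F₁.card + F₂.card ≤ n.choose k - (n - k).choose k + 1 := by
  have hcard : #(Icc 1 n) = n := by simp
  have := CrossIntersecting.card_add_card_add_choose_le hcross hF₁ hF₂ hne₁ hne₂ (by rwa [hcard])
  rw [hcard] at this
  omega

theorem stmt_9 (n k l : ℕ) (hk : 0 < k) (hl : 0 < l) (hn : 2 * k ≤ n)
    (F₁ F₂ : Finset (Finset ℕ))
    (hF₁ : F₁ ⊆ (Finset.Icc 1 n).powersetCard k)
    (hF₂ : F₂ ⊆ (Finset.Icc 1 n).powersetCard k)
    (hne₁ : F₁.Nonempty) (hne₂ : F₂.Nonempty)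
    (hcross : ∀ A ∈ F₁, ∀ B ∈ F₂, (A ∩ B).Nonempty) :
    F₁.card + F₂.card ≤ n.choose k - (n - k).choose k + 1 :=
  stmt_9_general n k hn F₁ F₂ hF₁ hF₂ hne₁ hne₂ hcross
end

section
/- Let r ≥ 2 and n, k_1, ..., k_r be positive integers. Suppose F_1 ⊆ C([n],k_1), ..., F_r ⊆ C([n],k_r) are non-empty cross-intersecting families with |F_{i*}| ≥ C(n-1, k_{i*}-1) for some i* ∈ [r]. Let k̄ = min{k_i : i ∈ [r], i ≠ i*}. If n ≥ k_i + k_{i*} for every i ≠ i*, then Σ_{i=1}^{r} |F_i| ≤ max{ C(n,k_{i*}) - C(n-k̄, k_{i*}) + Σ_{i ≠ i*} C(n-k̄, k_i - k̄), Σ_{i=1}^{r} C(n-1, k_i - 1) }. -/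
/-!
Write `a = k_{i*}`, `γ = n - a`, and let `C` be the family of complements of the members of
`F_{i*}`: a family of `γ`-sets with `C(n - 1, γ) ≤ |C|`. A `k_i`-set meets every member of
`F_{i*}` exactly when it lies in no member of `C`, so `F_i` avoids the shadow `∂^{γ - k_i} C`;
and a `k̄`-set `B` from one of the other families shows that `C` misses all `C(n - k̄, γ - k̄)`
supersets of `B`. It remains to bound `|C| + Σ_{i ≠ i*} (C(n, k_i) - |∂^{γ - k_i} C|)`.

By Kruskal–Katona, `C` may be replaced by the colex initial segment `J` of the same size. Such a
segment either lies in `C([n - 1], γ)`, or contains all of it together with `{n} ∪ L` for its link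
`L`, again an initial segment, on one vertex and one level less. Induction on the ground set and
on `k̄` bounds the quantity by its value at a construction built around a fixed `d`-set with
`1 ≤ d ≤ k̄`, and these values, as a function of `d`, are largest at `d = 1` or `d = k̄`.
-/

open Finset Finset.Colex
open scoped FinsetFamily

namespace CrossIntersecting

lemma choose_sub_sub_le {ν γ : ℕ} (d : ℕ) (h : γ ≤ ν) :
    (ν - d).choose (γ - d) ≤ ν.choose γ := by
  rcases le_total d γ with hd | hd
  · calc (ν - d).choose (γ - d) = (ν - d).choose (ν - γ) := by
          rw [← Nat.choose_symm (by omega), show ν - d - (γ - d) = ν - γ by omega]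
      _ ≤ ν.choose (ν - γ) := Nat.choose_le_choose _ (Nat.sub_le ν d)
      _ = ν.choose γ := Nat.choose_symm h
  · rw [Nat.sub_eq_zero_of_le hd, Nat.choose_zero_right]
    exact Nat.choose_pos h

lemma choose_add_sum_Ico_choose {s N : ℕ} (t : ℕ) (h : s ≤ N) :
    s.choose (t + 1) + ∑ x ∈ Ico s N, x.choose t = N.choose (t + 1) := by
  induction N, h using Nat.le_induction with
  | base => simp
  | succ N hsN ih =>
    rw [sum_Ico_succ_top hsN, ← add_assoc, ih, Nat.choose_succ_succ', add_comm]

section Dominance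

variable {ι : Type*} {I : Finset ι} {f : ι → ℕ} {g : ℕ}

/-- Since `C(x+1, t) = (x+1) C(x, t) / (x+1-t)` grows fastest for the largest `t`, dominance of
`C(x, g)` over a sum of `C(x, t)` with `t ≤ g` persists as `x` grows. -/
lemma sum_choose_succ_lt_choose_succ {x : ℕ} (hf : ∀ i ∈ I, f i ≤ g)
    (h : ∑ i ∈ I, x.choose (f i) < x.choose g) :
    ∑ i ∈ I, (x + 1).choose (f i) < (x + 1).choose g := by
  have key : ∀ t ≤ g, (x + 1 - g) * (x + 1).choose t ≤ (x + 1) * x.choose t := fun t ht => by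
    calc (x + 1 - g) * (x + 1).choose t ≤ (x + 1 - t) * (x + 1).choose t :=
          Nat.mul_le_mul_right _ (by omega)
      _ = (x + 1) * x.choose t := by rw [mul_comm, ← Nat.choose_mul_succ_eq, mul_comm]
  refine lt_of_mul_lt_mul_left (a := x + 1 - g) ?_ (Nat.zero_le _)
  calc (x + 1 - g) * ∑ i ∈ I, (x + 1).choose (f i) ≤ (x + 1) * ∑ i ∈ I, x.choose (f i) := by
        rw [mul_sum, mul_sum]
        exact sum_le_sum fun i hi => key _ (hf i hi)
    _ < (x + 1) * x.choose g := Nat.mul_lt_mul_of_pos_left h x.succ_pos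
    _ = (x + 1 - g) * (x + 1).choose g := by rw [mul_comm, Nat.choose_mul_succ_eq, mul_comm]

lemma sum_choose_lt_choose_of_le {x y : ℕ} (hxy : x ≤ y) (hf : ∀ i ∈ I, f i ≤ g)
    (h : ∑ i ∈ I, x.choose (f i) < x.choose g) :
    ∑ i ∈ I, y.choose (f i) < y.choose g := by
  induction y, hxy using Nat.le_induction with
  | base => exact h
  | succ y _ ih => exact sum_choose_succ_lt_choose_succ hf ih

/-- `(M + 1) C(M, t) = (t + 1) C(M + 1, t + 1)` and `t + 1 ≤ g + 1`. -/
lemma sum_choose_lt_choose_of_succ {M : ℕ} (hf : ∀ i ∈ I, f i ≤ g)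
    (h : ∑ i ∈ I, (M + 1).choose (f i + 1) < (M + 1).choose (g + 1)) :
    ∑ i ∈ I, M.choose (f i) < M.choose g := by
  refine lt_of_mul_lt_mul_left (a := M + 1) ?_ (Nat.zero_le _)
  calc (M + 1) * ∑ i ∈ I, M.choose (f i) ≤ (g + 1) * ∑ i ∈ I, (M + 1).choose (f i + 1) := by
        rw [mul_sum, mul_sum]
        refine sum_le_sum fun i hi => ?_
        rw [Nat.add_one_mul_choose_eq, mul_comm]
        exact Nat.mul_le_mul_right _ (by have := hf i hi; omega)
    _ < (g + 1) * (M + 1).choose (g + 1) := Nat.mul_lt_mul_of_pos_left h g.succ_pos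
    _ = (M + 1) * M.choose g := by rw [Nat.add_one_mul_choose_eq, mul_comm]

end Dominance

lemma le_max_of_lt_succ_imp {f : ℕ → ℕ} {a b : ℕ}
    (hf : ∀ d, a ≤ d → d + 2 ≤ b → f d < f (d + 1) → f (d + 1) < f (d + 2))
    {d : ℕ} (had : a ≤ d) (hdb : d ≤ b) : f d ≤ max (f a) (f b) := by
  by_cases hup : ∃ e, a ≤ e ∧ e < d ∧ f e < f (e + 1)
  · obtain ⟨e, hae, hed, hlt⟩ := hup
    have hinc : ∀ q, e ≤ q → q + 1 ≤ b → f q < f (q + 1) := by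
      intro q heq
      induction q, heq using Nat.le_induction with
      | base => exact fun _ => hlt
      | succ q heq ih => exact fun hqb => hf q (by omega) hqb (ih (by omega))
    have hmono : ∀ q, d ≤ q → q ≤ b → f d ≤ f q := by
      intro q hdq
      induction q, hdq using Nat.le_induction with
      | base => exact fun _ => le_rfl
      | succ q hdq ih => exact fun hqb => (ih (by omega)).trans (hinc q (by omega) hqb).le
    exact le_max_of_le_right (hmono b hdb le_rfl)
  · push Not at hup
    have hanti : ∀ q, a ≤ q → q ≤ d → f q ≤ f a := by
      intro q haq
      induction q, haq using Nat.le_induction with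
      | base => exact fun _ => le_rfl
      | succ q haq ih => exact fun hqd => (hup q haq (by omega)).trans (ih (by omega))
    exact le_max_of_le_left (hanti d had le_rfl)

section CoreBound

variable {ι : Type*} {I : Finset ι} {b : ι → ℕ} {ν γ : ℕ}

/-- The total size of the construction built around a fixed `d`-set `D ⊆ [ν]`: the `γ`-sets
not containing `D` (complements of the `k_{i*}`-sets meeting `D`), and for each `i ∈ I` the
`b i`-sets containing `D`. -/
def coreBound (ν γ : ℕ) (I : Finset ι) (b : ι → ℕ) (d : ℕ) : ℕ :=
  ν.choose γ - (ν - d).choose (γ - d) + ∑ i ∈ I, (ν - d).choose (b i - d)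

lemma coreBound_succ_add {d : ℕ} (hb : ∀ i ∈ I, d + 1 ≤ b i) (hdγ : d + 1 ≤ γ) (hγν : γ ≤ ν) :
    coreBound ν γ I b (d + 1) + ∑ i ∈ I, (ν - d - 1).choose (b i - d) =
      coreBound ν γ I b d + (ν - d - 1).choose (γ - d) := by
  have hpascal : ∀ t, d + 1 ≤ t →
      (ν - d).choose (t - d) = (ν - (d + 1)).choose (t - (d + 1)) + (ν - d - 1).choose (t - d) :=
    fun t ht => by
      rw [Nat.choose_eq_choose_pred_add (by omega) (by omega)]
      congr 2
  have hsum : ∑ i ∈ I, (ν - d).choose (b i - d) = ∑ i ∈ I, (ν - (d + 1)).choose (b i - (d + 1))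
      + ∑ i ∈ I, (ν - d - 1).choose (b i - d) := by
    rw [← sum_add_distrib]
    exact sum_congr rfl fun i hi => hpascal _ (hb i hi)
  have hγ := hpascal γ hdγ
  have hle := choose_sub_sub_le (d + 1) hγν
  have hle' := choose_sub_sub_le d hγν
  unfold coreBound
  omega

lemma coreBound_lt_succ_succ {d : ℕ} (hb : ∀ i ∈ I, d + 2 ≤ b i ∧ b i ≤ γ) (hdγ : d + 2 ≤ γ)
    (hγν : γ ≤ ν) (h : coreBound ν γ I b d < coreBound ν γ I b (d + 1)) :
    coreBound ν γ I b (d + 1) < coreBound ν γ I b (d + 2) := by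
  have hstep := coreBound_succ_add (I := I) (b := b) (d := d)
    (fun i hi => by have := hb i hi; omega) (by omega) hγν
  have hstep' := coreBound_succ_add (I := I) (b := b) (d := d + 1)
    (fun i hi => (hb i hi).1) hdγ hγν
  have hshift : ∀ t, d + 1 ≤ t → (ν - (d + 2) + 1).choose (t - (d + 1) + 1) =
      (ν - d - 1).choose (t - d) := fun t ht => by congr 1 <;> omega
  have hshift' : ∀ t, (ν - (d + 2)).choose (t - (d + 1)) =
      (ν - (d + 1) - 1).choose (t - (d + 1)) := fun t => by congr 1
  have hlt := sum_choose_lt_choose_of_succ (I := I) (f := fun i => b i - (d + 1))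
    (g := γ - (d + 1)) (M := ν - (d + 2)) (fun i hi => by have := hb i hi; omega) (by
      rw [sum_congr rfl fun i hi => hshift (b i) (by have := hb i hi; omega),
        hshift γ (by omega)]
      omega)
  simp only [hshift'] at hlt
  show _ < coreBound ν γ I b (d + 1 + 1)
  omega

lemma coreBound_le_max {β d : ℕ} (hb : ∀ i ∈ I, β ≤ b i ∧ b i ≤ γ) (hβγ : β ≤ γ) (hγν : γ ≤ ν)
    (hd : 1 ≤ d) (hdβ : d ≤ β) :
    coreBound ν γ I b d ≤ max (coreBound ν γ I b 1) (coreBound ν γ I b β) :=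
  le_max_of_lt_succ_imp (f := coreBound ν γ I b) (fun _ _ heβ => coreBound_lt_succ_succ
    (fun i hi => ⟨by have := hb i hi; omega, (hb i hi).2⟩) (by omega) hγν) hd hdβ

lemma coreBound_one (hγ : 1 ≤ γ) (hγν : γ ≤ ν) :
    coreBound ν γ I b 1 = (ν - 1).choose γ + ∑ i ∈ I, (ν - 1).choose (b i - 1) := by
  have := Nat.choose_eq_choose_pred_add (n := ν) (by omega) hγ
  unfold coreBound
  omega

lemma choose_add_coreBound_pred (hγ : 1 ≤ γ) (hγν : γ ≤ ν) (d : ℕ) :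
    (ν - 1).choose γ + coreBound (ν - 1) (γ - 1) I (fun i => b i - 1) d =
      coreBound ν γ I b (d + 1) := by
  have hpascal := Nat.choose_eq_choose_pred_add (n := ν) (by omega) hγ
  have hle := choose_sub_sub_le d (show γ - 1 ≤ ν - 1 by omega)
  unfold coreBound
  simp only [Nat.sub_sub, add_comm 1 d] at hle ⊢
  omega

end CoreBound

/-- By the hockey-stick identity both sides of `h` are sums over `x ∈ [s, N)`, so the dominance
holds at some `x < N`, and then at `N`. -/
lemma sum_choose_pred_lt_of_sum_sub_lt {ι : Type*} {I : Finset ι} {f : ι → ℕ} {g s N : ℕ}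
    (hsN : s ≤ N) (hf : ∀ i ∈ I, 1 ≤ f i ∧ f i ≤ g) (hg : 1 ≤ g)
    (h : ∑ i ∈ I, (N.choose (f i) - s.choose (f i)) < N.choose g - s.choose g) :
    ∑ i ∈ I, N.choose (f i - 1) < N.choose (g - 1) := by
  have hdiff : ∀ t, 1 ≤ t → N.choose t - s.choose t = ∑ x ∈ Ico s N, x.choose (t - 1) :=
    fun t ht => by
      have := choose_add_sum_Ico_choose (t - 1) hsN
      rw [Nat.sub_add_cancel ht] at this
      omega
  rw [sum_congr rfl fun i hi => hdiff _ (hf i hi).1, hdiff g hg, sum_comm] at h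
  obtain ⟨x, hx, hlt⟩ := exists_lt_of_sum_lt h
  exact sum_choose_lt_choose_of_le (mem_Ico.1 hx).2.le
    (fun i hi => Nat.sub_le_sub_right (hf i hi).2 1) hlt

section SingletonBound

variable {ι : Type*} {I : Finset ι} {b : ι → ℕ} {ν γ : ℕ}

/-- The value of `#J + ∑ i, (C(ν, b i) - #∂^[γ - b i] J)` at a single `γ`-set `J = {A}`. -/
def singletonBound (ν γ : ℕ) (I : Finset ι) (b : ι → ℕ) : ℕ :=
  1 + ∑ i ∈ I, (ν.choose (b i) - γ.choose (b i))

lemma singletonBound_filter_pos :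
    singletonBound ν γ (I.filter (0 < b ·)) b = singletonBound ν γ I b := by
  unfold singletonBound
  rw [sum_filter_of_ne fun i _ h => Nat.pos_of_ne_zero fun h0 => h (by simp [h0])]

lemma singletonBound_pred_add (hb : ∀ i ∈ I, 1 ≤ b i) (hγν : γ + 1 ≤ ν) :
    singletonBound (ν - 1) γ I b + ∑ i ∈ I, (ν - 1).choose (b i - 1) =
      singletonBound ν γ I b := by
  unfold singletonBound
  rw [add_assoc, ← sum_add_distrib]
  congr 1
  refine sum_congr rfl fun i hi => ?_
  have := Nat.choose_eq_choose_pred_add (n := ν) (by omega) (hb i hi)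
  have := Nat.choose_le_choose (b i) (show γ ≤ ν - 1 by omega)
  omega

lemma choose_add_singletonBound_pred_le (hI : I.Nonempty) (hb : ∀ i ∈ I, 1 ≤ b i ∧ b i ≤ γ)
    (hγν : γ + 1 ≤ ν) :
    (ν - 1).choose γ + singletonBound (ν - 1) (γ - 1) I (fun i => b i - 1) ≤
      coreBound ν γ I b 1 := by
  obtain ⟨i₀, hi₀⟩ := hI
  have hγ : 1 ≤ γ := by have := hb i₀ hi₀; omega
  have hsum : ∑ i ∈ I, ((ν - 1).choose (b i - 1) - (γ - 1).choose (b i - 1)) +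
      ∑ i ∈ I, (γ - 1).choose (b i - 1) = ∑ i ∈ I, (ν - 1).choose (b i - 1) := by
    rw [← sum_add_distrib]
    exact sum_congr rfl fun i _ => Nat.sub_add_cancel (Nat.choose_le_choose _ (by omega))
  have hpos : 1 ≤ ∑ i ∈ I, (γ - 1).choose (b i - 1) :=
    calc 1 ≤ (γ - 1).choose (b i₀ - 1) := Nat.choose_pos (by have := hb i₀ hi₀; omega)
      _ ≤ _ := single_le_sum (f := fun i => (γ - 1).choose (b i - 1)) (fun _ _ => Nat.zero_le _) hi₀
  rw [coreBound_one hγ (by omega)]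
  simp only [singletonBound]
  omega

/-- If the full level beats the singleton at ground size `ν - 1`, it gains even more in the step
to `ν`, by `sum_choose_pred_lt_of_sum_sub_lt` with `s = γ`. -/
lemma max_singletonBound_pred_add_le (hb : ∀ i ∈ I, 1 ≤ b i ∧ b i ≤ γ) (hγ : 1 ≤ γ)
    (hγν : γ + 1 ≤ ν) :
    max (singletonBound (ν - 1) γ I b) ((ν - 1).choose γ) + ∑ i ∈ I, (ν - 1).choose (b i - 1) ≤
      max (singletonBound ν γ I b) (ν.choose γ) := by
  have hX := singletonBound_pred_add (fun i hi => (hb i hi).1) hγν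
  rcases le_or_gt ((ν - 1).choose γ) (singletonBound (ν - 1) γ I b) with hle | hlt
  · rw [max_eq_left hle, hX]
    exact le_max_left _ _
  · have hdom := sum_choose_pred_lt_of_sum_sub_lt (N := ν - 1) (show γ ≤ ν - 1 by omega) hb hγ
      (by unfold singletonBound at hlt; rw [Nat.choose_self]; omega)
    have := Nat.choose_eq_choose_pred_add (n := ν) (by omega) hγ
    rw [max_eq_right hlt.le]
    omega

/-- As `max_singletonBound_pred_add_le`, now with `s = γ - 1`. -/
lemma choose_add_max_singletonBound_pred_le (hb : ∀ i ∈ I, 1 ≤ b i ∧ b i ≤ γ) (hγ : 1 ≤ γ)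
    (hγν : γ + 1 ≤ ν) :
    (ν - 1).choose γ + max (singletonBound (ν - 1) (γ - 1) I (fun i => b i - 1))
        ((ν - 1).choose (γ - 1)) ≤
      max (singletonBound ν γ I b) (ν.choose γ) := by
  have hpascal := Nat.choose_eq_choose_pred_add (n := ν) (by omega) hγ
  rw [← max_add_add_left]
  refine max_le ?_ (by omega)
  have hsplit : ∀ i ∈ I, ν.choose (b i) - γ.choose (b i) =
      ((ν - 1).choose (b i) - (γ - 1).choose (b i)) +
        ((ν - 1).choose (b i - 1) - (γ - 1).choose (b i - 1)) := fun i hi => by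
    have := Nat.choose_eq_choose_pred_add (n := ν) (by omega) (hb i hi).1
    have := Nat.choose_eq_choose_pred_add (n := γ) hγ (hb i hi).1
    have := Nat.choose_le_choose (b i) (show γ - 1 ≤ ν - 1 by omega)
    have := Nat.choose_le_choose (b i - 1) (show γ - 1 ≤ ν - 1 by omega)
    omega
  simp only [singletonBound]
  rw [sum_congr rfl hsplit, sum_add_distrib]
  rcases le_or_gt ((ν - 1).choose γ) (∑ i ∈ I, ((ν - 1).choose (b i) - (γ - 1).choose (b i)))
    with hle | hlt
  · exact le_max_of_le_left (by omega)
  · have hdom := sum_choose_pred_lt_of_sum_sub_lt (N := ν - 1) (show γ - 1 ≤ ν - 1 by omega) hb hγ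
      (by rw [Nat.choose_eq_zero_of_lt (show γ - 1 < γ by omega)]; omega)
    have hsub : ∑ i ∈ I, ((ν - 1).choose (b i - 1) - (γ - 1).choose (b i - 1)) ≤
        ∑ i ∈ I, (ν - 1).choose (b i - 1) := sum_le_sum fun i _ => Nat.sub_le _ _
    exact le_max_of_le_right (by omega)

end SingletonBound

/-- The paper's `C([ν], γ)`. -/
def level (ν γ : ℕ) : Finset (Finset ℕ) := (Icc 1 ν).powersetCard γ

def IsInitSegment (ν γ : ℕ) (J : Finset (Finset ℕ)) : Prop :=
  J ⊆ level ν γ ∧ ∀ A ∈ J, ∀ B ∈ level ν γ, toColex B ≤ toColex A → B ∈ J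

def link (ν : ℕ) (J : Finset (Finset ℕ)) : Finset (Finset ℕ) :=
  (J.filter (ν ∈ ·)).image (·.erase ν)

section Families

variable {ν γ b : ℕ} {A B : Finset ℕ} {J : Finset (Finset ℕ)}

lemma mem_level : A ∈ level ν γ ↔ A ⊆ Icc 1 ν ∧ #A = γ := mem_powersetCard

lemma card_level (ν γ : ℕ) : #(level ν γ) = ν.choose γ := by simp [level]

lemma mem_level_pred : A ∈ level (ν - 1) γ ↔ A ∈ level ν γ ∧ ν ∉ A := by
  simp only [mem_level]
  constructor
  · rintro ⟨hA, rfl⟩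
    exact ⟨⟨hA.trans (Icc_subset_Icc_right (by omega)), rfl⟩,
      fun h => by have := mem_Icc.1 (hA h); omega⟩
  · rintro ⟨⟨hA, rfl⟩, hν⟩
    refine ⟨fun x hx => ?_, rfl⟩
    have := mem_Icc.1 (hA hx)
    have : x ≠ ν := fun h => hν (h ▸ hx)
    exact mem_Icc.2 (by omega)

lemma mem_link : B ∈ link ν J ↔ ν ∉ B ∧ insert ν B ∈ J := by
  simp only [link, mem_image, mem_filter]
  constructor
  · rintro ⟨A, ⟨hA, hν⟩, rfl⟩
    exact ⟨notMem_erase _ _, by rwa [insert_erase hν]⟩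
  · rintro ⟨hν, hB⟩
    exact ⟨insert ν B, ⟨hB, mem_insert_self _ _⟩, erase_insert hν⟩

lemma link_nonempty (hA : A ∈ J) (hν : ν ∈ A) : (link ν J).Nonempty :=
  ⟨A.erase ν, mem_link.2 ⟨notMem_erase _ _, by rwa [insert_erase hν]⟩⟩

lemma card_link : #(link ν J) = #(J.filter (ν ∈ ·)) :=
  card_image_of_injOn fun A hA B hB hAB => by
    rw [mem_coe, mem_filter] at hA hB
    rw [← insert_erase hA.2, ← insert_erase hB.2]
    exact congrArg (insert ν) hAB

namespace IsInitSegment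

lemma level_pred_subset (hJ : IsInitSegment ν γ J) (hA : A ∈ J) (hν : ν ∈ A) :
    level (ν - 1) γ ⊆ J := fun B hB => by
  refine hJ.2 A hA B (mem_level_pred.1 hB).1 (le_of_lt ?_)
  calc toColex B < toColex {ν} := toColex_lt_singleton.2 fun x hx => by
        have := mem_Icc.1 ((mem_level.1 hB).1 hx)
        omega
    _ ≤ toColex A := toColex_le_toColex_of_subset (singleton_subset_iff.2 hν)

lemma pred (hJ : IsInitSegment ν γ J) (h : ∀ A ∈ J, ν ∉ A) : IsInitSegment (ν - 1) γ J :=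
  ⟨fun A hA => mem_level_pred.2 ⟨hJ.1 hA, h A hA⟩,
    fun A hA B hB hle => hJ.2 A hA B (mem_level_pred.1 hB).1 hle⟩

lemma card_eq_choose_add_card_link (hJ : IsInitSegment ν γ J) (hlow : level (ν - 1) γ ⊆ J) :
    #J = (ν - 1).choose γ + #(link ν J) := by
  have hbot : J.filter (ν ∉ ·) = level (ν - 1) γ := by
    ext A
    rw [mem_filter, mem_level_pred]
    exact ⟨fun h => ⟨hJ.1 h.1, h.2⟩, fun h => ⟨hlow (mem_level_pred.2 h), h.2⟩⟩
  rw [card_link, ← card_level, ← hbot, add_comm]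
  exact (card_filter_add_card_filter_not _).symm

lemma isInitSegment_link (hJ : IsInitSegment ν γ J) : IsInitSegment (ν - 1) (γ - 1) (link ν J) := by
  have hlevel : ∀ {B}, ν ∉ B → insert ν B ∈ level ν γ → B ∈ level (ν - 1) (γ - 1) :=
    fun {B} hν hB => by
      rw [mem_level, card_insert_of_notMem hν] at hB
      refine mem_level_pred.2 ⟨mem_level.2 ⟨(subset_insert _ _).trans hB.1, by omega⟩, hν⟩
  refine ⟨fun B hB => hlevel (mem_link.1 hB).1 (hJ.1 (mem_link.1 hB).2), fun A hA B hB hle => ?_⟩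
  obtain ⟨hνA, hAJ⟩ := mem_link.1 hA
  obtain ⟨hBν, hB'⟩ := mem_level.1 hB
  obtain ⟨hAν, hA'⟩ := mem_level.1 (hJ.1 hAJ)
  have hνB : ν ∉ B := fun h => by have := mem_Icc.1 (hBν h); omega
  refine mem_link.2 ⟨hνB, hJ.2 _ hAJ _ ?_ ?_⟩
  · refine mem_level.2 ⟨insert_subset (hAν (mem_insert_self _ _))
      (hBν.trans (Icc_subset_Icc_right (by omega))), ?_⟩
    rw [card_insert_of_notMem hνB, hB']
    rw [card_insert_of_notMem hνA] at hA'
    omega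
  · rwa [← toColex_sdiff_le_toColex_sdiff (u := {ν}) (by simp) (by simp),
      sdiff_singleton_eq_erase, sdiff_singleton_eq_erase, erase_insert hνB, erase_insert hνA]

end IsInitSegment

lemma shadow_iterate_subset_level {C : Finset (Finset ℕ)} (hC : C ⊆ level ν γ) (j : ℕ) :
    ∂^[j] C ⊆ level ν (γ - j) := fun B hB => by
  obtain ⟨A, hA, hBA, hcard⟩ := mem_shadow_iterate_iff_exists_mem_card_add.1 hB
  obtain ⟨hA', rfl⟩ := mem_level.1 (hC hA)
  exact mem_level.2 ⟨hBA.trans hA', by omega⟩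

lemma level_subset_shadow_iterate_level (hbγ : b ≤ γ) (hγν : γ ≤ ν) :
    level ν b ⊆ ∂^[γ - b] (level ν γ) := fun B hB => by
  obtain ⟨hBν, rfl⟩ := mem_level.1 hB
  obtain ⟨A, hBA, hA, hcard⟩ := exists_subsuperset_card_eq hBν hbγ (by simpa using hγν)
  exact mem_shadow_iterate_iff_exists_mem_card_add.2 ⟨A, mem_level.2 ⟨hA, hcard⟩, hBA, by omega⟩

lemma card_shadow_iterate_singleton (hA : #A = γ) (hbγ : b ≤ γ) :
    #(∂^[γ - b] {A}) = γ.choose b := by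
  have : ∂^[γ - b] {A} = A.powersetCard b := by
    ext B
    simp only [mem_shadow_iterate_iff_exists_mem_card_add, mem_singleton, exists_eq_left,
      mem_powersetCard]
    constructor
    · rintro ⟨hBA, hcard⟩
      exact ⟨hBA, by omega⟩
    · rintro ⟨hBA, rfl⟩
      exact ⟨hBA, by omega⟩
  rw [this, card_powersetCard, hA]

lemma empty_mem_shadow_iterate (hA : A ∈ J) (hγ : #A = γ) : ∅ ∈ ∂^[γ] J :=
  mem_shadow_iterate_iff_exists_mem_card_add.2 ⟨A, hA, empty_subset _, by simpa using hγ⟩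

lemma image_insert_shadow_iterate_link_subset (j : ℕ) :
    (∂^[j] (link ν J)).image (insert ν) ⊆ ∂^[j] J := by
  intro B' hB'
  obtain ⟨B, hB, rfl⟩ := mem_image.1 hB'
  obtain ⟨A, hA, hBA, hcard⟩ := mem_shadow_iterate_iff_exists_mem_card_add.1 hB
  obtain ⟨hνA, hAJ⟩ := mem_link.1 hA
  have hνB : ν ∉ B := fun h => hνA (hBA h)
  refine mem_shadow_iterate_iff_exists_mem_card_add.2 ⟨_, hAJ, insert_subset_insert _ hBA, ?_⟩
  rw [card_insert_of_notMem hνA, card_insert_of_notMem hνB, hcard]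
  omega

/-- The `b`-sets in the shadow of `J` split into those avoiding `ν`, which form all of
`level (ν - 1) b`, and those containing `ν`, which come from the shadow of the link. -/
lemma choose_add_card_shadow_iterate_link_le (hlow : level (ν - 1) γ ⊆ J) (hbγ : b ≤ γ)
    (hγν : γ ≤ ν - 1) :
    (ν - 1).choose b + #(∂^[γ - b] (link ν J)) ≤ #(∂^[γ - b] J) := by
  have hlink : ∀ B ∈ ∂^[γ - b] (link ν J), ν ∉ B := fun B hB => by
    obtain ⟨A, hA, hBA, -⟩ := mem_shadow_iterate_iff_exists_mem_card_add.1 hB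
    exact fun h => (mem_link.1 hA).1 (hBA h)
  have hdisj : Disjoint (level (ν - 1) b) ((∂^[γ - b] (link ν J)).image (insert ν)) :=
    disjoint_left.2 fun B hB hB' => by
      obtain ⟨B', -, rfl⟩ := mem_image.1 hB'
      exact (mem_level_pred.1 hB).2 (mem_insert_self _ _)
  have hsub : level (ν - 1) b ⊆ ∂^[γ - b] J :=
    (level_subset_shadow_iterate_level hbγ hγν).trans
      (Monotone.iterate shadow_monotone _ hlow)
  have hinj : #((∂^[γ - b] (link ν J)).image (insert ν)) = #(∂^[γ - b] (link ν J)) :=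
    card_image_of_injOn fun B hB C hC hBC => by
      rw [← erase_insert (hlink B hB), ← erase_insert (hlink C hC)]
      exact congrArg (·.erase ν) hBC
  rw [← card_level (ν - 1) b, ← hinj, ← card_union_of_disjoint hdisj]
  exact card_le_card (union_subset hsub (image_insert_shadow_iterate_link_subset _))

end Families

section KruskalKatona

lemma shadow_image_map {α β : Type*} [DecidableEq α] [DecidableEq β] (f : α ↪ β)
    (𝒜 : Finset (Finset α)) : ∂ (𝒜.image (·.map f)) = (∂ 𝒜).image (·.map f) := by
  ext t
  simp only [mem_shadow_iff, mem_image]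
  constructor
  · rintro ⟨_, ⟨s, hs, rfl⟩, _, hfa, rfl⟩
    obtain ⟨a, ha, rfl⟩ := mem_map.1 hfa
    exact ⟨s.erase a, ⟨s, hs, a, ha, rfl⟩, map_erase f s a⟩
  · rintro ⟨_, ⟨s, hs, a, ha, rfl⟩, rfl⟩
    exact ⟨s.map f, ⟨s, hs, rfl⟩, f a, mem_map_of_mem f ha, (map_erase f s a).symm⟩

lemma shadow_iterate_image_map {α β : Type*} [DecidableEq α] [DecidableEq β] (f : α ↪ β)
    (𝒜 : Finset (Finset α)) (j : ℕ) : ∂^[j] (𝒜.image (·.map f)) = (∂^[j] 𝒜).image (·.map f) := by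
  induction j with
  | zero => rfl
  | succ j ih =>
    rw [Function.iterate_succ_apply', Function.iterate_succ_apply', ih, shadow_image_map]

def finSucc (n : ℕ) : Fin n ↪ ℕ := ⟨fun i => i + 1, fun i j h => Fin.ext (by simpa using h)⟩

@[simp]
lemma finSucc_apply {n : ℕ} (i : Fin n) : finSucc n i = i + 1 := rfl

lemma finSucc_strictMono (n : ℕ) : StrictMono (finSucc n) := fun _ _ h => Nat.succ_lt_succ h

lemma exists_image_map_finSucc_eq {n : ℕ} {𝒜 : Finset (Finset ℕ)} (h𝒜 : ∀ A ∈ 𝒜, A ⊆ Icc 1 n) :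
    ∃ 𝒜' : Finset (Finset (Fin n)), 𝒜'.image (·.map (finSucc n)) = 𝒜 := by
  have hpre : ∀ A ∈ 𝒜, (univ.filter (finSucc n · ∈ A)).map (finSucc n) = A := fun A hA => by
    ext x
    simp only [mem_map, mem_filter, mem_univ, true_and]
    refine ⟨fun ⟨i, hi, hix⟩ => hix ▸ hi, fun hx => ?_⟩
    have := mem_Icc.1 (h𝒜 A hA hx)
    exact ⟨⟨x - 1, by omega⟩, by simpa [show x - 1 + 1 = x by omega] using hx, by simp; omega⟩
  refine ⟨univ.filter (fun s => s.map (finSucc n) ∈ 𝒜), ?_⟩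
  ext A
  simp only [mem_image, mem_filter, mem_univ, true_and]
  exact ⟨fun ⟨s, hs, hsA⟩ => hsA ▸ hs, fun hA => ⟨_, (hpre A hA).symm ▸ hA, hpre A hA⟩⟩

/-- The Kruskal–Katona theorem on the ground set `[n]`, transported from `Fin n`. -/
lemma card_shadow_iterate_le {n γ : ℕ} {C J : Finset (Finset ℕ)} (hC : C ⊆ level n γ)
    (hJ : IsInitSegment n γ J) (hcard : #J ≤ #C) (j : ℕ) : #(∂^[j] J) ≤ #(∂^[j] C) := by
  obtain ⟨C', rfl⟩ := exists_image_map_finSucc_eq fun A hA => (mem_level.1 (hC hA)).1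
  obtain ⟨J', rfl⟩ := exists_image_map_finSucc_eq fun A hA => (mem_level.1 (hJ.1 hA)).1
  have hinj : Function.Injective (map (finSucc n)) := map_injective _
  have hsized : ∀ {𝒜 : Finset (Finset (Fin n))}, 𝒜.image (·.map (finSucc n)) ⊆ level n γ →
      (𝒜 : Set (Finset (Fin n))).Sized γ :=
    fun h𝒜 s hs => by simpa using (mem_level.1 (h𝒜 (mem_image_of_mem _ hs))).2
  have hinit : IsInitSeg J' γ := by
    refine ⟨hsized hJ.1, fun s t hs ⟨hts, ht⟩ => hinj.mem_finset_image.1 ?_⟩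
    refine hJ.2 _ (mem_image_of_mem _ hs) _ (mem_level.2 ⟨fun x hx => ?_, by simpa using ht⟩)
      (by simpa [map_eq_image, toColex_image_le_toColex_image (finSucc_strictMono n)]
        using hts.le)
    obtain ⟨i, -, rfl⟩ := mem_map.1 hx
    exact mem_Icc.2 ⟨by simp, by simp⟩
  rw [shadow_iterate_image_map, shadow_iterate_image_map, card_image_of_injective _ hinj,
    card_image_of_injective _ hinj]
  rw [card_image_of_injective _ hinj, card_image_of_injective _ hinj] at hcard
  exact iterated_kk (hsized hC) hcard hinit

lemma exists_isInitSegment_card_eq (ν γ : ℕ) {m : ℕ} (hm : m ≤ ν.choose γ) :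
    ∃ J, IsInitSegment ν γ J ∧ #J = m := by
  induction m with
  | zero => exact ⟨∅, ⟨empty_subset _, by simp⟩, rfl⟩
  | succ m ih =>
    obtain ⟨J, hJ, rfl⟩ := ih (by omega)
    have hne : (level ν γ \ J).Nonempty := by
      rw [← card_pos, card_sdiff_of_subset hJ.1, card_level]
      omega
    obtain ⟨B, hB, hBmin⟩ := exists_min_image _ toColex hne
    obtain ⟨hBlevel, hBJ⟩ := mem_sdiff.1 hB
    refine ⟨insert B J, ⟨insert_subset hBlevel hJ.1, fun A hA C hC hCA => ?_⟩,
      card_insert_of_notMem hBJ⟩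
    by_contra hCJ
    have hCJ' : C ∉ J := fun h => hCJ (mem_insert_of_mem h)
    have hBC := hBmin C (mem_sdiff.2 ⟨hC, hCJ'⟩)
    rcases mem_insert.1 hA with rfl | hA
    · exact hCJ (by rw [le_antisymm hCA hBC |> toColex_inj.1]; exact mem_insert_self _ _)
    · exact hCJ' (hJ.2 A hA C hC hCA)

end KruskalKatona

section ShadowBounded

variable {ι : Type*} {I : Finset ι} {b : ι → ℕ} {ν γ β M : ℕ} {A : Finset ℕ}
  {J C : Finset (Finset ℕ)}

/-- The bound on `∑ |F_i|` in terms of the complement family `J` of `F_{i*}`, with `F_i` replaced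
by the complement of the shadow `∂^[γ - b i] J` it has to avoid. -/
def ShadowBounded (ν γ : ℕ) (I : Finset ι) (b : ι → ℕ) (M : ℕ) (J : Finset (Finset ℕ)) : Prop :=
  #J + ∑ i ∈ I, ν.choose (b i) ≤ M + ∑ i ∈ I, #(∂^[γ - b i] J)

namespace ShadowBounded

lemma mono {M' : ℕ} (h : ShadowBounded ν γ I b M J) (hM : M ≤ M') :
    ShadowBounded ν γ I b M' J := by
  simp only [ShadowBounded] at *
  omega

lemma of_card_shadow_iterate_le (h : ShadowBounded ν γ I b M J) (hcard : #C = #J)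
    (hsh : ∀ i ∈ I, #(∂^[γ - b i] J) ≤ #(∂^[γ - b i] C)) : ShadowBounded ν γ I b M C := by
  have := sum_le_sum hsh
  simp only [ShadowBounded] at *
  omega

/-- An index with `b i = 0` contributes `C(ν, 0) = 1 = #∂^[γ] J` to both sides. -/
lemma of_filter_pos (hJ : J ⊆ level ν γ) (hne : J.Nonempty)
    (h : ShadowBounded ν γ (I.filter (0 < b ·)) b M J) : ShadowBounded ν γ I b M J := by
  obtain ⟨A, hA⟩ := hne
  have hzero : ∑ i ∈ I.filter (¬0 < b ·), ν.choose (b i) ≤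
      ∑ i ∈ I.filter (¬0 < b ·), #(∂^[γ - b i] J) := sum_le_sum fun i hi => by
    rw [show b i = 0 by simpa using (mem_filter.1 hi).2, Nat.choose_zero_right, Nat.sub_zero,
      Nat.one_le_iff_ne_zero, ← pos_iff_ne_zero, card_pos]
    exact ⟨∅, empty_mem_shadow_iterate hA (mem_level.1 (hJ hA)).2⟩
  simp only [ShadowBounded] at *
  rw [← sum_filter_add_sum_filter_not I (0 < b ·), ← sum_filter_add_sum_filter_not I (0 < b ·)]
  omega

lemma succ (h : ShadowBounded (ν - 1) γ I b M J) (hb : ∀ i ∈ I, 1 ≤ b i) (hν : 1 ≤ ν) :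
    ShadowBounded ν γ I b (M + ∑ i ∈ I, (ν - 1).choose (b i - 1)) J := by
  have hpascal : ∑ i ∈ I, ν.choose (b i) =
      ∑ i ∈ I, (ν - 1).choose (b i - 1) + ∑ i ∈ I, (ν - 1).choose (b i) := by
    rw [← sum_add_distrib]
    exact sum_congr rfl fun i hi => Nat.choose_eq_choose_pred_add hν (hb i hi)
  simp only [ShadowBounded] at *
  omega

/-- Peeling off the vertex `ν`: `J` consists of all of `level (ν - 1) γ` and the link, and each
shadow of `J` contains the corresponding full level of `[ν - 1]` next to the shadow of the link. -/
lemma of_link (h : ShadowBounded (ν - 1) (γ - 1) I (fun i => b i - 1) M (link ν J))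
    (hJ : IsInitSegment ν γ J) (hlow : level (ν - 1) γ ⊆ J) (hb : ∀ i ∈ I, 1 ≤ b i ∧ b i ≤ γ)
    (hγν : γ + 1 ≤ ν) : ShadowBounded ν γ I b ((ν - 1).choose γ + M) J := by
  have hpascal : ∑ i ∈ I, ν.choose (b i) =
      ∑ i ∈ I, (ν - 1).choose (b i - 1) + ∑ i ∈ I, (ν - 1).choose (b i) := by
    rw [← sum_add_distrib]
    exact sum_congr rfl fun i hi => Nat.choose_eq_choose_pred_add (by omega) (hb i hi).1
  have hsh : ∑ i ∈ I, (ν - 1).choose (b i) + ∑ i ∈ I, #(∂^[γ - b i] (link ν J)) ≤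
      ∑ i ∈ I, #(∂^[γ - b i] J) := by
    rw [← sum_add_distrib]
    exact sum_le_sum fun i hi =>
      choose_add_card_shadow_iterate_link_le hlow (hb i hi).2 (by omega)
  have hexp : ∑ i ∈ I, #(∂^[γ - 1 - (b i - 1)] (link ν J)) =
      ∑ i ∈ I, #(∂^[γ - b i] (link ν J)) :=
    sum_congr rfl fun i hi => by rw [show γ - 1 - (b i - 1) = γ - b i by have := hb i hi; omega]
  have hcard := hJ.card_eq_choose_add_card_link hlow
  simp only [ShadowBounded] at *
  omega

end ShadowBounded

lemma shadowBounded_singleton (hA : #A = γ) (hb : ∀ i ∈ I, b i ≤ γ) (hγν : γ ≤ ν) :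
    ShadowBounded ν γ I b (singletonBound ν γ I b) {A} := by
  have hsum : ∑ i ∈ I, ν.choose (b i) =
      ∑ i ∈ I, (ν.choose (b i) - γ.choose (b i)) + ∑ i ∈ I, #(∂^[γ - b i] {A}) := by
    rw [← sum_add_distrib]
    refine sum_congr rfl fun i hi => ?_
    rw [card_shadow_iterate_singleton hA (hb i hi),
      Nat.sub_add_cancel (Nat.choose_le_choose _ hγν)]
  unfold ShadowBounded singletonBound
  rw [card_singleton, hsum]
  omega

lemma shadowBounded_level_pred (hb : ∀ i ∈ I, 1 ≤ b i ∧ b i ≤ γ) (hγ : 1 ≤ γ)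
    (hγν : γ + 1 ≤ ν) : ShadowBounded ν γ I b (coreBound ν γ I b 1) (level (ν - 1) γ) := by
  have hpascal : ∑ i ∈ I, ν.choose (b i) =
      ∑ i ∈ I, (ν - 1).choose (b i - 1) + ∑ i ∈ I, (ν - 1).choose (b i) := by
    rw [← sum_add_distrib]
    exact sum_congr rfl fun i hi => Nat.choose_eq_choose_pred_add (by omega) (hb i hi).1
  have hsh : ∑ i ∈ I, (ν - 1).choose (b i) ≤ ∑ i ∈ I, #(∂^[γ - b i] (level (ν - 1) γ)) :=
    sum_le_sum fun i hi => by
      rw [← card_level]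
      exact card_le_card (level_subset_shadow_iterate_level (hb i hi).2 (by omega))
  rw [ShadowBounded, coreBound_one hγ (by omega), card_level]
  omega

/-- Over nonempty initial segments, `#J + ∑ i, (C(ν, b i) - #∂^[γ - b i] J)` is largest at a
single set or at the whole level. -/
theorem IsInitSegment.shadowBounded (hJ : IsInitSegment ν γ J) (hne : J.Nonempty)
    (hb : ∀ i ∈ I, b i ≤ γ) :
    ShadowBounded ν γ I b (max (singletonBound ν γ I b) (ν.choose γ)) J := by
  induction ν using Nat.strong_induction_on generalizing γ I b J with
  | _ ν ih =>
  rw [← singletonBound_filter_pos]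
  refine ShadowBounded.of_filter_pos hJ.1 hne ?_
  have hb' : ∀ i ∈ I.filter (0 < b ·), 1 ≤ b i ∧ b i ≤ γ :=
    fun i hi => ⟨(mem_filter.1 hi).2, hb i (mem_filter.1 hi).1⟩
  obtain ⟨A, hA⟩ := hne
  obtain ⟨hAν, hAγ⟩ := mem_level.1 (hJ.1 hA)
  have hγν : γ ≤ ν := by simpa [hAγ] using card_le_card hAν
  by_cases hγ : 1 ≤ γ ∧ γ + 1 ≤ ν
  · by_cases htop : ∃ A ∈ J, ν ∈ A
    · obtain ⟨A, hA, hν⟩ := htop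
      refine (ShadowBounded.of_link ?_ hJ (hJ.level_pred_subset hA hν) hb' hγ.2).mono
        (choose_add_max_singletonBound_pred_le hb' hγ.1 hγ.2)
      exact ih (ν - 1) (by omega) hJ.isInitSegment_link (link_nonempty hA hν)
        fun i hi => by have := hb' i hi; omega
    · push Not at htop
      exact ((ih (ν - 1) (by omega) (hJ.pred htop) ⟨A, hA⟩ fun i hi => (hb' i hi).2).succ
        (fun i hi => (hb' i hi).1) (by omega)).mono (max_singletonBound_pred_add_le hb' hγ.1 hγ.2)
  · have hcard : #J ≤ 1 := by
      refine (card_le_card hJ.1).trans ?_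
      rw [card_level]
      rcases Nat.eq_zero_or_pos γ with rfl | hγ0
      · simp
      · rw [show γ = ν by omega, Nat.choose_self]
    have hJA : J = {A} :=
      eq_singleton_iff_unique_mem.2 ⟨hA, fun B hB => card_le_one.1 hcard B hB A hA⟩
    rw [hJA]
    exact (shadowBounded_singleton hAγ (fun i hi => (hb' i hi).2) hγν).mono (le_max_left _ _)

lemma IsInitSegment.shadowBounded_of_forall_notMem (hJ : IsInitSegment ν γ J) (hne : J.Nonempty)
    (htop : ∀ A ∈ J, ν ∉ A) (hb : ∀ i ∈ I, 1 ≤ b i ∧ b i ≤ γ) (hγ : 1 ≤ γ) (hγν : γ + 1 ≤ ν) :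
    ShadowBounded ν γ I b (max (singletonBound ν γ I b) (coreBound ν γ I b 1)) J := by
  have h := ((hJ.pred htop).shadowBounded hne fun i hi => (hb i hi).2).succ
    (fun i hi => (hb i hi).1) (by omega)
  rwa [← max_add_add_right, singletonBound_pred_add (fun i hi => (hb i hi).1) hγν,
    ← coreBound_one hγ (by omega)] at h

lemma ShadowBounded.coreBound_of_link
    (h : ShadowBounded (ν - 1) (γ - 1) I (fun i => b i - 1)
      (max (singletonBound (ν - 1) (γ - 1) I (fun i => b i - 1))
        (max (coreBound (ν - 1) (γ - 1) I (fun i => b i - 1) 1)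
          (coreBound (ν - 1) (γ - 1) I (fun i => b i - 1) (β - 1)))) (link ν J))
    (hJ : IsInitSegment ν γ J) (hlow : level (ν - 1) γ ⊆ J) (hI : I.Nonempty) (hβ : 2 ≤ β)
    (hb : ∀ i ∈ I, β ≤ b i ∧ b i ≤ γ) (hγν : γ + 1 ≤ ν) :
    ShadowBounded ν γ I b (max (coreBound ν γ I b 1) (coreBound ν γ I b β)) J := by
  obtain ⟨i₀, hi₀⟩ := hI
  have hβγ : β ≤ γ := (hb i₀ hi₀).1.trans (hb i₀ hi₀).2
  have hb1 : ∀ i ∈ I, 1 ≤ b i ∧ b i ≤ γ := fun i hi => ⟨by have := hb i hi; omega, (hb i hi).2⟩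
  refine (h.of_link hJ hlow hb1 hγν).mono ?_
  rw [← max_add_add_left, ← max_add_add_left, choose_add_coreBound_pred (by omega) (by omega),
    choose_add_coreBound_pred (by omega) (by omega), Nat.sub_add_cancel (by omega : 1 ≤ β)]
  exact max_le ((choose_add_singletonBound_pred_le ⟨i₀, hi₀⟩ hb1 hγν).trans (le_max_left _ _))
    (max_le (coreBound_le_max hb hβγ (by omega) (by omega) hβ) (le_max_right _ _))

theorem IsInitSegment.shadowBounded_coreBound (hJ : IsInitSegment ν γ J) (hA : A ∈ J)
    (hν : ν ∈ A) (hI : I.Nonempty) (hβ : 1 ≤ β) (hb : ∀ i ∈ I, β ≤ b i ∧ b i ≤ γ)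
    (hwit : #J + (ν - β).choose (γ - β) ≤ ν.choose γ) :
    ShadowBounded ν γ I b (max (coreBound ν γ I b 1) (coreBound ν γ I b β)) J := by
  induction β using Nat.strong_induction_on generalizing ν γ b J A with
  | _ β ih =>
  obtain ⟨i₀, hi₀⟩ := hI
  have hβγ : β ≤ γ := (hb i₀ hi₀).1.trans (hb i₀ hi₀).2
  have hlow := hJ.level_pred_subset hA hν
  have hcard := hJ.card_eq_choose_add_card_link hlow
  have hlink := card_pos.2 (link_nonempty hA hν)
  obtain ⟨hAν, hAγ⟩ := mem_level.1 (hJ.1 hA)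
  have hγν : γ + 1 ≤ ν := by
    have : γ ≤ ν := by simpa [hAγ] using card_le_card hAν
    by_contra
    rw [show γ = ν by omega, Nat.choose_self, Nat.choose_self] at hwit
    omega
  have hpascal := Nat.choose_eq_choose_pred_add (n := ν) (k := γ) (by omega) (by omega)
  have hβ2 : 2 ≤ β := by
    by_contra
    rw [show β = 1 by omega] at hwit
    omega
  have hwit' :
      #(link ν J) + (ν - 1 - (β - 1)).choose (γ - 1 - (β - 1)) ≤ (ν - 1).choose (γ - 1) := by
    rw [show ν - 1 - (β - 1) = ν - β by omega, show γ - 1 - (β - 1) = γ - β by omega]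
    omega
  have hb' : ∀ i ∈ I, β - 1 ≤ b i - 1 ∧ b i - 1 ≤ γ - 1 := fun i hi => by
    have := hb i hi
    omega
  refine ShadowBounded.coreBound_of_link ?_ hJ hlow ⟨i₀, hi₀⟩ hβ2 hb hγν
  by_cases htop : ∃ B ∈ link ν J, ν - 1 ∈ B
  · obtain ⟨B, hB, hνB⟩ := htop
    exact (ih (β - 1) (by omega) hJ.isInitSegment_link hB hνB (by omega) hb' hwit').mono
      (le_max_right _ _)
  · push Not at htop
    exact (hJ.isInitSegment_link.shadowBounded_of_forall_notMem (link_nonempty hA hν) htop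
      (fun i hi => ⟨by have := hb' i hi; omega, (hb' i hi).2⟩) (by omega) (by omega)).mono
      (max_le_max le_rfl (le_max_left _ _))

/-- Among `γ`-families `C` with `C(ν - 1, γ) ≤ #C` that miss all `C(ν - β, γ - β)` supersets of
some `β`-set, the bound is attained by one of the two extreme constructions. -/
theorem shadowBounded_coreBound (hC : C ⊆ level ν γ) (hbig : (ν - 1).choose γ ≤ #C)
    (hwit : #C + (ν - β).choose (γ - β) ≤ ν.choose γ) (hI : I.Nonempty) (hβ : 1 ≤ β)
    (hb : ∀ i ∈ I, β ≤ b i ∧ b i ≤ γ) (hγν : γ + 1 ≤ ν) :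
    ShadowBounded ν γ I b (max (coreBound ν γ I b 1) (coreBound ν γ I b β)) C := by
  obtain ⟨J, hJ, hJC⟩ := exists_isInitSegment_card_eq ν γ (m := #C) (by omega)
  refine ShadowBounded.of_card_shadow_iterate_le ?_ hJC.symm
    fun i _ => card_shadow_iterate_le hC hJ hJC.le _
  by_cases htop : ∃ A ∈ J, ν ∈ A
  · obtain ⟨A, hA, hν⟩ := htop
    exact hJ.shadowBounded_coreBound hA hν hI hβ hb (hJC ▸ hwit)
  · push Not at htop
    obtain ⟨i₀, hi₀⟩ := hI
    have hJlow : J = level (ν - 1) γ :=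
      eq_of_subset_of_card_le (hJ.pred htop).1 (by rw [card_level, hJC]; exact hbig)
    rw [hJlow]
    exact (shadowBounded_level_pred (fun i hi => ⟨by have := hb i hi; omega, (hb i hi).2⟩)
      (by have := hb i₀ hi₀; omega) hγν).mono (le_max_left _ _)

end ShadowBounded

section Complements

variable {n a k : ℕ} {B : Finset ℕ} {𝒜 F : Finset (Finset ℕ)}

lemma image_sdiff_subset_level (h𝒜 : 𝒜 ⊆ level n a) :
    𝒜.image (Icc 1 n \ ·) ⊆ level n (n - a) := fun X hX => by
  obtain ⟨A, hA, rfl⟩ := mem_image.1 hX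
  obtain ⟨hAn, hAa⟩ := mem_level.1 (h𝒜 hA)
  exact mem_level.2 ⟨sdiff_subset, by rw [card_sdiff_of_subset hAn, Nat.card_Icc, hAa]; omega⟩

lemma card_image_sdiff (h𝒜 : 𝒜 ⊆ level n a) : #(𝒜.image (Icc 1 n \ ·)) = #𝒜 :=
  card_image_of_injOn fun A hA A' hA' h => by
    rw [← Finset.sdiff_sdiff_eq_self (mem_level.1 (h𝒜 hA)).1,
      ← Finset.sdiff_sdiff_eq_self (mem_level.1 (h𝒜 hA')).1]
    exact congrArg (Icc 1 n \ ·) h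

/-- A `k`-set meeting every member of `𝒜` lies in no shadow of a complement of a member of `𝒜`. -/
lemma card_add_card_shadow_iterate_image_sdiff_le (hF : F ⊆ level n k) (h𝒜 : 𝒜 ⊆ level n a)
    (hcross : ∀ B ∈ F, ∀ A ∈ 𝒜, (B ∩ A).Nonempty) (hka : k + a ≤ n) :
    #F + #(∂^[n - a - k] (𝒜.image (Icc 1 n \ ·))) ≤ n.choose k := by
  have hdisj : Disjoint F (∂^[n - a - k] (𝒜.image (Icc 1 n \ ·))) :=
    disjoint_left.2 fun B hB hB' => by
      obtain ⟨X, hX, hBX, -⟩ := mem_shadow_iterate_iff_exists_mem_card_add.1 hB'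
      obtain ⟨A, hA, rfl⟩ := mem_image.1 hX
      obtain ⟨x, hx⟩ := hcross B hB A hA
      exact (mem_sdiff.1 (hBX (mem_inter.1 hx).1)).2 (mem_inter.1 hx).2
  have hsh := shadow_iterate_subset_level (image_sdiff_subset_level h𝒜) (n - a - k)
  rw [show n - a - (n - a - k) = k by omega] at hsh
  rw [← card_level n k, ← card_union_of_disjoint hdisj]
  exact card_le_card (union_subset hF hsh)

lemma card_filter_superset_level (hB : B ⊆ Icc 1 n) {γ : ℕ} (hBγ : #B ≤ γ) :
    #((level n γ).filter (B ⊆ ·)) = (n - #B).choose (γ - #B) := by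
  have hcompl : n - #B = #(Icc 1 n \ B) := by rw [card_sdiff_of_subset hB, Nat.card_Icc]; omega
  rw [hcompl, ← card_powersetCard]
  refine card_nbij' (· \ B) (· ∪ B) (fun X hX => ?_) (fun D hD => ?_) (fun X hX => ?_)
    (fun D hD => ?_)
  · obtain ⟨hXlevel, hBX⟩ := mem_filter.1 hX
    obtain ⟨hXn, rfl⟩ := mem_level.1 hXlevel
    exact mem_powersetCard.2 ⟨sdiff_subset_sdiff hXn le_rfl, card_sdiff_of_subset hBX⟩
  · obtain ⟨hDn, hDcard⟩ := mem_powersetCard.1 (mem_coe.1 hD)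
    have hdisj : Disjoint D B := disjoint_of_subset_left hDn sdiff_disjoint
    refine mem_filter.2 ⟨mem_level.2 ⟨union_subset (hDn.trans sdiff_subset) hB, ?_⟩,
      subset_union_right⟩
    rw [card_union_of_disjoint hdisj]
    omega
  · exact sdiff_union_of_subset (mem_filter.1 hX).2
  · exact union_sdiff_cancel_right
      (disjoint_of_subset_left (mem_powersetCard.1 (mem_coe.1 hD)).1 sdiff_disjoint)

/-- The complement of a member of `𝒜` can contain no set `B` that meets all members of `𝒜`. -/
lemma card_image_sdiff_add_choose_le (h𝒜 : 𝒜 ⊆ level n a) (hB : B ∈ level n k)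
    (hcross : ∀ A ∈ 𝒜, (A ∩ B).Nonempty) (hka : k + a ≤ n) :
    #(𝒜.image (Icc 1 n \ ·)) + (n - k).choose (n - a - k) ≤ n.choose (n - a) := by
  obtain ⟨hBn, rfl⟩ := mem_level.1 hB
  have hdisj : Disjoint (𝒜.image (Icc 1 n \ ·)) ((level n (n - a)).filter (B ⊆ ·)) :=
    disjoint_left.2 fun X hX hX' => by
      obtain ⟨A, hA, rfl⟩ := mem_image.1 hX
      obtain ⟨x, hx⟩ := hcross A hA
      exact (mem_sdiff.1 ((mem_filter.1 hX').2 (mem_inter.1 hx).2)).2 (mem_inter.1 hx).1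
  rw [← card_filter_superset_level hBn (by omega), ← card_level n (n - a),
    ← card_union_of_disjoint hdisj]
  exact card_le_card (union_subset (image_sdiff_subset_level h𝒜) (filter_subset _ _))

/-- `F'` is `F_{i*}`, and `B` is a member of one of the families `F i` of least size `β = k̄`. -/
theorem card_add_sum_card_le_max {ι : Type*} {I : Finset ι} {k : ι → ℕ} {F : ι → Finset (Finset ℕ)}
    {F' : Finset (Finset ℕ)} {β : ℕ} (hF' : F' ⊆ level n a) (hbig : (n - 1).choose (a - 1) ≤ #F')
    (hF : ∀ i ∈ I, F i ⊆ level n (k i)) (hcross : ∀ i ∈ I, ∀ A ∈ F i, ∀ A' ∈ F', (A ∩ A').Nonempty)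
    (hB : B ∈ level n β) (hBcross : ∀ A' ∈ F', (A' ∩ B).Nonempty) (hI : I.Nonempty) (hβ : 1 ≤ β)
    (ha : 1 ≤ a) (hk : ∀ i ∈ I, β ≤ k i ∧ k i + a ≤ n) :
    #F' + ∑ i ∈ I, #(F i) ≤
      max (n.choose a - (n - β).choose a + ∑ i ∈ I, (n - β).choose (k i - β))
        ((n - 1).choose (a - 1) + ∑ i ∈ I, (n - 1).choose (k i - 1)) := by
  have hβa : β + a ≤ n := by
    obtain ⟨i₀, hi₀⟩ := hI
    have := hk i₀ hi₀
    omega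
  have hsymm : (n - 1).choose (n - a) = (n - 1).choose (a - 1) := by
    rw [show n - a = n - 1 - (a - 1) by omega, Nat.choose_symm (by omega)]
  have hcore₁ := coreBound_one (I := I) (b := k) (show 1 ≤ n - a by omega) (Nat.sub_le n a)
  have hcoreβ : coreBound n (n - a) I k β =
      n.choose a - (n - β).choose a + ∑ i ∈ I, (n - β).choose (k i - β) := by
    rw [coreBound, Nat.choose_symm (by omega), show n - a - β = n - β - a by omega,
      Nat.choose_symm (by omega)]
  have key := shadowBounded_coreBound (image_sdiff_subset_level hF')
    (by rw [card_image_sdiff hF', hsymm]; exact hbig)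
    (card_image_sdiff_add_choose_le hF' hB hBcross hβa) hI hβ
    (fun i hi => ⟨(hk i hi).1, by have := hk i hi; omega⟩) (by omega)
  have hF_le : ∑ i ∈ I, #(F i) + ∑ i ∈ I, #(∂^[n - a - k i] (F'.image (Icc 1 n \ ·))) ≤
      ∑ i ∈ I, n.choose (k i) := by
    rw [← sum_add_distrib]
    exact sum_le_sum fun i hi => card_add_card_shadow_iterate_image_sdiff_le (hF i hi) hF'
      (hcross i hi) (hk i hi).2
  rw [ShadowBounded, card_image_sdiff hF', hcore₁, hcoreβ, hsymm, max_comm] at key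
  omega

end Complements

end CrossIntersecting

open CrossIntersecting in
theorem stmt_13_general (r n : ℕ) (k : ℕ → ℕ) (i' kb : ℕ)
    (hkpos : ∀ i ∈ Finset.Icc 1 r, 0 < k i)
    (hi' : i' ∈ Finset.Icc 1 r)
    (hkb_le : ∀ i ∈ Finset.Icc 1 r, i ≠ i' → kb ≤ k i)
    (hkb_mem : ∃ i ∈ Finset.Icc 1 r, i ≠ i' ∧ k i = kb)
    (hni : ∀ i ∈ Finset.Icc 1 r, i ≠ i' → k i + k i' ≤ n)
    (F : ℕ → Finset (Finset ℕ))
    (hF : ∀ i ∈ Finset.Icc 1 r, F i ⊆ (Finset.Icc 1 n).powersetCard (k i))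
    (hne : ∀ i ∈ Finset.Icc 1 r, (F i).Nonempty)
    (hbig : (n - 1).choose (k i' - 1) ≤ (F i').card)
    (hcross : ∀ i ∈ Finset.Icc 1 r, ∀ j ∈ Finset.Icc 1 r, i ≠ j →
      ∀ A ∈ F i, ∀ B ∈ F j, (A ∩ B).Nonempty) :
    ∑ i ∈ Finset.Icc 1 r, (F i).card
      ≤ max (n.choose (k i') - (n - kb).choose (k i')
              + ∑ i ∈ (Finset.Icc 1 r).filter (fun i => i ≠ i'), (n - kb).choose (k i - kb))
            (∑ i ∈ Finset.Icc 1 r, (n - 1).choose (k i - 1)) := by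
  obtain ⟨j₀, hj₀, hj₀i', rfl⟩ := hkb_mem
  obtain ⟨B, hB⟩ := hne j₀ hj₀
  rw [Finset.filter_ne', ← Finset.add_sum_erase _ _ hi', ← Finset.add_sum_erase _ _ hi']
  refine card_add_sum_card_le_max (hF i' hi') hbig (fun i hi => hF i (Finset.mem_of_mem_erase hi))
    (fun i hi => hcross i (Finset.mem_of_mem_erase hi) i' hi' (Finset.ne_of_mem_erase hi))
    (hF j₀ hj₀ hB) (fun A hA => hcross i' hi' j₀ hj₀ (Ne.symm hj₀i') A hA B hB)
    ⟨j₀, Finset.mem_erase.2 ⟨hj₀i', hj₀⟩⟩ (hkpos j₀ hj₀) (hkpos i' hi') fun i hi => ?_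
  obtain ⟨hii', hi⟩ := Finset.mem_erase.1 hi
  exact ⟨hkb_le i hi hii', hni i hi hii'⟩

theorem stmt_13 (r n : ℕ) (k : ℕ → ℕ) (i' kb : ℕ) (hr : 2 ≤ r) (hn : 0 < n)
    (hkpos : ∀ i ∈ Finset.Icc 1 r, 0 < k i)
    (hi' : i' ∈ Finset.Icc 1 r)
    (hkb_le : ∀ i ∈ Finset.Icc 1 r, i ≠ i' → kb ≤ k i)
    (hkb_mem : ∃ i ∈ Finset.Icc 1 r, i ≠ i' ∧ k i = kb)
    (hni : ∀ i ∈ Finset.Icc 1 r, i ≠ i' → k i + k i' ≤ n)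
    (F : ℕ → Finset (Finset ℕ))
    (hF : ∀ i ∈ Finset.Icc 1 r, F i ⊆ (Finset.Icc 1 n).powersetCard (k i))
    (hne : ∀ i ∈ Finset.Icc 1 r, (F i).Nonempty)
    (hbig : (n - 1).choose (k i' - 1) ≤ (F i').card)
    (hcross : ∀ i ∈ Finset.Icc 1 r, ∀ j ∈ Finset.Icc 1 r, i ≠ j →
      ∀ A ∈ F i, ∀ B ∈ F j, (A ∩ B).Nonempty) :
    ∑ i ∈ Finset.Icc 1 r, (F i).card
      ≤ max (n.choose (k i') - (n - kb).choose (k i')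
              + ∑ i ∈ (Finset.Icc 1 r).filter (fun i => i ≠ i'), (n - kb).choose (k i - kb))
            (∑ i ∈ Finset.Icc 1 r, (n - 1).choose (k i - 1)) :=
  stmt_13_general r n k i' kb hkpos hi' hkb_le hkb_mem hni F hF hne hbig hcross
end

section
/- Let n, k, l be positive integers with n > k + l. If A ⊆ C([n],k) with |A| = C(n-s, k-s) for some 1 ≤ s ≤ k, then |D_l(A)| ≥ C(n-s, l), where D_l(A) = {D ∈ C([n],l) : there exists A ∈ A with A ∩ D = ∅}. Equality holds if and only if A = {F ∈ C([n],k) : S ⊆ F} for some s-element set S ⊆ [n]. -/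
/-!
With `U = [n]`, a set `D` misses some member of `A` iff it lies in some member of
`B = {U \ a | a ∈ A}`, so `D_l(A)` is the `(n - k - l)`-fold shadow of the family `B` of
`C(n - s, n - k)` sets of size `n - k`, and the bound is Lovász's form of Kruskal–Katona.

Equality: a family `𝒜` of `r`-sets with `|𝒜| ≥ C(m, r)` and `|∂ 𝒜| ≤ C(m, r - 1)` consists of all
`r`-subsets of an `m`-set. Split `𝒜` at a vertex `a` into its link `ℒ` and the sets `𝒟` avoiding
`a`, so that `|∂ 𝒜| = |∂ ℒ| + |ℒ ∪ ∂ 𝒟|`. If `|ℒ| ≥ C(m - 1, r - 1)`, Lovász's bound for `ℒ` and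
Pascal's rule leave no slack: `ℒ` is extremal, hence a clique by induction on `r`, and
`∂ 𝒟 ⊆ ℒ` puts `𝒟` inside the same clique. A vertex of such degree is found by compressing
towards a fixed `x`: a family fixed by these compressions has `∂ 𝒟 ⊆ ℒ` at `x`, which forces the
degree of `x`; otherwise a compression `x ← y` yields, by induction, a clique, and the degrees of
vertices other than `x`, `y` are the same in `𝒜` and in the clique.
-/

open Finset
open scoped FinsetFamily

namespace Finset

variable {α : Type*} [DecidableEq α]

theorem shadow_image_map {β : Type*} [DecidableEq β] (e : α ↪ β) (𝒜 : Finset (Finset α)) :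
    ∂ (𝒜.image (map e)) = (∂ 𝒜).image (map e) := by
  ext t
  simp only [mem_shadow_iff, mem_image]
  constructor
  · rintro ⟨_, ⟨s, hs, rfl⟩, _, hb, rfl⟩
    obtain ⟨a, ha, rfl⟩ := mem_map.1 hb
    exact ⟨s.erase a, ⟨s, hs, a, ha, rfl⟩, map_erase e s a⟩
  · rintro ⟨_, ⟨s, hs, a, ha, rfl⟩, rfl⟩
    exact ⟨s.map e, ⟨s, hs, rfl⟩, e a, mem_map_of_mem e ha, (map_erase e s a).symm⟩

theorem shadow_iterate_image_map {β : Type*} [DecidableEq β] (e : α ↪ β)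
    (𝒜 : Finset (Finset α)) (i : ℕ) :
    ∂^[i] (𝒜.image (map e)) = (∂^[i] 𝒜).image (map e) :=
  ((Function.Semiconj.iterate_right (fun ℬ => (shadow_image_map e ℬ).symm) i 𝒜 :)).symm

theorem exists_image_map_eq [Infinite α] (𝒜 : Finset (Finset α)) (m : ℕ) :
    ∃ N, m ≤ N ∧ ∃ (e : Fin N ↪ α) (𝒜' : Finset (Finset (Fin N))), 𝒜'.image (map e) = 𝒜 := by
  obtain ⟨T, hT, hcard⟩ :=
    Infinite.exists_superset_card_eq (𝒜.sup id) (#(𝒜.sup id) + m) le_self_add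
  let e : Fin #T ↪ α := T.equivFin.symm.toEmbedding.trans (Function.Embedding.subtype _)
  have he : univ.map e = T := by
    ext x
    simpa [e] using ⟨fun ⟨a, h⟩ => h ▸ (T.equivFin.symm a).2,
      fun hx => ⟨T.equivFin ⟨x, hx⟩, by simp⟩⟩
  refine ⟨#T, by omega, e, 𝒜.preimage (map e) (map_injective e).injOn, ?_⟩
  rw [image_preimage, filter_true_of_mem]
  intro a ha
  obtain ⟨u, -, rfl⟩ := subset_map_iff.1 ((le_sup (f := id) ha).trans (hT.trans he.ge))
  exact ⟨u, rfl⟩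

/-- `kruskal_katona_lovasz_form`, moved from `Fin N` to an infinite type. -/
theorem choose_le_card_shadow_iterate [Infinite α] {𝒜 : Finset (Finset α)} {i r m : ℕ}
    (hir : i ≤ r) (hrm : r ≤ m) (h𝒜 : (𝒜 : Set (Finset α)).Sized r) (hcard : m.choose r ≤ #𝒜) :
    m.choose (r - i) ≤ #(∂^[i] 𝒜) := by
  obtain ⟨N, hmN, e, 𝒜', rfl⟩ := exists_image_map_eq 𝒜 m
  have hinj : Function.Injective (map e) := map_injective e
  rw [card_image_of_injective _ hinj] at hcard
  rw [shadow_iterate_image_map, card_image_of_injective _ hinj]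
  refine kruskal_katona_lovasz_form hir hrm hmN (fun a ha => ?_) hcard
  simpa using h𝒜 (mem_image_of_mem (map e) ha)

theorem memberSubfamily_shadow (a : α) (𝒜 : Finset (Finset α)) :
    (∂ 𝒜).memberSubfamily a = ∂ (𝒜.memberSubfamily a) := by
  ext s
  simp only [mem_memberSubfamily, mem_shadow_iff_insert_mem]
  grind [insert_comm]

theorem nonMemberSubfamily_shadow (a : α) (𝒜 : Finset (Finset α)) :
    (∂ 𝒜).nonMemberSubfamily a = 𝒜.memberSubfamily a ∪ ∂ (𝒜.nonMemberSubfamily a) := by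
  ext s
  simp only [mem_nonMemberSubfamily, mem_union, mem_memberSubfamily, mem_shadow_iff_insert_mem]
  grind

theorem card_shadow_eq_card_shadow_memberSubfamily_add (a : α) (𝒜 : Finset (Finset α)) :
    #(∂ 𝒜) = #(∂ (𝒜.memberSubfamily a)) + #(𝒜.memberSubfamily a ∪ ∂ (𝒜.nonMemberSubfamily a)) := by
  rw [← memberSubfamily_shadow, ← nonMemberSubfamily_shadow,
    card_memberSubfamily_add_card_nonMemberSubfamily]

theorem _root_.Set.Sized.memberSubfamily {𝒜 : Finset (Finset α)} {r : ℕ}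
    (h𝒜 : (𝒜 : Set (Finset α)).Sized r) (a : α) :
    (𝒜.memberSubfamily a : Set (Finset α)).Sized (r - 1) := by
  intro s hs
  rw [mem_coe, mem_memberSubfamily] at hs
  have := h𝒜 hs.1
  rw [card_insert_of_notMem hs.2] at this
  omega

theorem _root_.Set.Sized.nonMemberSubfamily {𝒜 : Finset (Finset α)} {r : ℕ}
    (h𝒜 : (𝒜 : Set (Finset α)).Sized r) (a : α) :
    (𝒜.nonMemberSubfamily a : Set (Finset α)).Sized r :=
  h𝒜.mono (coe_subset.2 (filter_subset _ _))

theorem memberSubfamily_powersetCard {W : Finset α} {a : α} (ha : a ∈ W) (r : ℕ) :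
    (W.powersetCard (r + 1)).memberSubfamily a = (W.erase a).powersetCard r := by
  ext s
  simp only [mem_memberSubfamily, mem_powersetCard, insert_subset_iff, subset_erase]
  constructor
  · rintro ⟨⟨⟨-, hsW⟩, hcard⟩, has⟩
    rw [card_insert_of_notMem has] at hcard
    exact ⟨⟨hsW, has⟩, by omega⟩
  · rintro ⟨⟨hsW, has⟩, hcard⟩
    exact ⟨⟨⟨ha, hsW⟩, by rw [card_insert_of_notMem has, hcard]⟩, has⟩

theorem shadow_iterate_powersetCard {W : Finset α} {i r : ℕ} (hir : i ≤ r) (hrW : r ≤ #W) :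
    ∂^[i] (W.powersetCard r) = W.powersetCard (r - i) := by
  ext t
  rw [mem_shadow_iterate_iff_exists_sdiff, mem_powersetCard]
  constructor
  · rintro ⟨s, hs, hts, hcard⟩
    rw [mem_powersetCard] at hs
    refine ⟨hts.trans hs.1, ?_⟩
    have := card_sdiff_add_card_eq_card hts
    omega
  · rintro ⟨htW, htcard⟩
    obtain ⟨s, hts, hsW, hscard⟩ := exists_subsuperset_card_eq htW (by omega : #t ≤ r) hrW
    refine ⟨s, mem_powersetCard.2 ⟨hsW, hscard⟩, hts, ?_⟩
    have := card_sdiff_add_card_eq_card hts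
    omega

theorem subset_powersetCard_of_shadow_subset {𝒜 : Finset (Finset α)} {W : Finset α} {r : ℕ}
    (hr : 2 ≤ r) (h𝒜 : (𝒜 : Set (Finset α)).Sized r) (h : ∂ 𝒜 ⊆ W.powersetCard (r - 1)) :
    𝒜 ⊆ W.powersetCard r := by
  intro a ha
  refine mem_powersetCard.2 ⟨fun y hy => ?_, h𝒜 ha⟩
  obtain ⟨z, hz, hzy⟩ := exists_mem_ne (by rw [h𝒜 ha]; omega) y
  exact (mem_powersetCard.1 (h (erase_mem_shadow ha hz))).1 (mem_erase.2 ⟨hzy.symm, hy⟩)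

theorem exists_eq_powersetCard_one {𝒜 : Finset (Finset α)} (h𝒜 : (𝒜 : Set (Finset α)).Sized 1) :
    ∃ W : Finset α, #W = #𝒜 ∧ 𝒜 = W.powersetCard 1 := by
  set W := 𝒜.sup id
  have h𝒜W : 𝒜 = W.powersetCard 1 := by
    ext a
    rw [mem_powersetCard]
    refine ⟨fun ha => ⟨le_sup (f := id) ha, h𝒜 ha⟩, fun ⟨haW, ha⟩ => ?_⟩
    obtain ⟨y, rfl⟩ := card_eq_one.1 ha
    obtain ⟨b, hb, hyb⟩ := mem_sup.1 (haW (mem_singleton_self y))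
    obtain ⟨z, rfl⟩ := card_eq_one.1 (h𝒜 hb)
    rwa [mem_singleton.1 hyb]
  refine ⟨W, ?_, h𝒜W⟩
  conv_rhs => rw [h𝒜W]
  rw [card_powersetCard, Nat.choose_one_right]

theorem eq_powersetCard_insert {𝒜 : Finset (Finset α)} {a : α} {W : Finset α} {r : ℕ}
    (hr : 2 ≤ r) (hrW : r ≤ #W + 1) (h𝒜 : (𝒜 : Set (Finset α)).Sized r)
    (hℒ : 𝒜.memberSubfamily a = W.powersetCard (r - 1))
    (h : ∂ (𝒜.nonMemberSubfamily a) ⊆ 𝒜.memberSubfamily a)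
    (hcard : (#W + 1).choose r ≤ #𝒜) :
    a ∉ W ∧ 𝒜 = (insert a W).powersetCard r := by
  have haW : a ∉ W := by
    intro haW
    obtain ⟨s, has, hsW, hs⟩ := exists_subsuperset_card_eq (singleton_subset_iff.2 haW)
      (by rw [card_singleton]; omega : #{a} ≤ r - 1) (by omega)
    have : s ∈ 𝒜.memberSubfamily a := hℒ ▸ mem_powersetCard.2 ⟨hsW, hs⟩
    exact (mem_memberSubfamily.1 this).2 (has (mem_singleton_self a))
  have h𝒟 : 𝒜.nonMemberSubfamily a ⊆ W.powersetCard r :=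
    subset_powersetCard_of_shadow_subset hr (h𝒜.nonMemberSubfamily a) (hℒ ▸ h)
  have hsub : 𝒜 ⊆ (insert a W).powersetCard r := by
    intro s hs
    by_cases has : a ∈ s
    · have : s.erase a ∈ W.powersetCard (r - 1) :=
        hℒ ▸ mem_memberSubfamily.2 ⟨by rwa [insert_erase has], notMem_erase a s⟩
      exact mem_powersetCard.2 ⟨subset_insert_iff.2 (mem_powersetCard.1 this).1, h𝒜 hs⟩
    · exact powersetCard_mono (subset_insert a W) (h𝒟 (mem_nonMemberSubfamily.2 ⟨hs, has⟩))
  refine ⟨haW, eq_of_subset_of_card_le hsub ?_⟩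
  rwa [card_powersetCard, card_insert_of_notMem haW]

theorem image_sdiff_image_sdiff {U : Finset α} {𝒜 : Finset (Finset α)} (h𝒜 : ∀ a ∈ 𝒜, a ⊆ U) :
    (𝒜.image (U \ ·)).image (U \ ·) = 𝒜 := by
  rw [image_image]
  conv_rhs => rw [← image_id (s := 𝒜)]
  exact image_congr fun a ha => sdiff_sdiff_eq_self (h𝒜 a ha)

theorem image_sdiff_powersetCard {U W : Finset α} (hW : W ⊆ U) {j : ℕ} (hj : j ≤ #U) :
    (W.powersetCard j).image (U \ ·) = {F ∈ U.powersetCard (#U - j) | U \ W ⊆ F} := by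
  ext F
  simp only [mem_image, mem_powersetCard, mem_filter]
  constructor
  · rintro ⟨a, ⟨haW, rfl⟩, rfl⟩
    exact ⟨⟨sdiff_subset, by rw [card_sdiff_of_subset (haW.trans hW)]⟩,
      sdiff_subset_sdiff le_rfl haW⟩
  · rintro ⟨⟨hFU, hF⟩, hWF⟩
    refine ⟨U \ F, ⟨?_, ?_⟩, sdiff_sdiff_eq_self hFU⟩
    · exact sdiff_le_comm.1 hWF
    · rw [card_sdiff_of_subset hFU]; omega

theorem image_sdiff_filter_subset {U S : Finset α} (hS : S ⊆ U) {k : ℕ} (hk : k ≤ #U) :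
    {F ∈ U.powersetCard k | S ⊆ F}.image (U \ ·) = (U \ S).powersetCard (#U - k) := by
  conv_rhs =>
    rw [← image_sdiff_image_sdiff fun a ha => (mem_powersetCard.1 ha).1.trans sdiff_subset]
  rw [image_sdiff_powersetCard sdiff_subset (Nat.sub_le _ _), Finset.sdiff_sdiff_eq_self hS,
    Nat.sub_sub_self hk]

theorem exists_eq_filter_subset_of_image_sdiff_eq_powersetCard {U W : Finset α}
    {𝒜 : Finset (Finset α)} {k : ℕ} (h𝒜 : 𝒜 ⊆ U.powersetCard k) (hk : k < #U)
    (hW : #U - k ≤ #W) (h : 𝒜.image (U \ ·) = W.powersetCard (#U - k)) :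
    ∃ S ∈ U.powersetCard (#U - #W), 𝒜 = {F ∈ U.powersetCard k | S ⊆ F} := by
  have hWU : W ⊆ U := by
    intro w hw
    obtain ⟨b, hwb, hbW, hb⟩ := exists_subsuperset_card_eq (singleton_subset_iff.2 hw)
      (by rw [card_singleton]; omega : #{w} ≤ #U - k) hW
    obtain ⟨a, -, rfl⟩ := mem_image.1 (h ▸ mem_powersetCard.2 ⟨hbW, hb⟩ : b ∈ 𝒜.image (U \ ·))
    exact sdiff_subset (hwb (mem_singleton_self w))
  refine ⟨U \ W, mem_powersetCard.2 ⟨sdiff_subset, card_sdiff_of_subset hWU⟩, ?_⟩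
  rw [← image_sdiff_image_sdiff fun a ha => (mem_powersetCard.1 (h𝒜 ha)).1, h,
    image_sdiff_powersetCard hWU (Nat.sub_le _ _), Nat.sub_sub_self hk.le]

theorem filter_exists_disjoint_eq_shadow_iterate {U : Finset α} {𝒜 : Finset (Finset α)}
    {k l : ℕ} (h𝒜 : 𝒜 ⊆ U.powersetCard k) (hkl : k + l ≤ #U) :
    {D ∈ U.powersetCard l | ∃ a ∈ 𝒜, a ∩ D = ∅} = ∂^[#U - k - l] (𝒜.image (U \ ·)) := by
  ext D
  simp only [mem_filter, mem_powersetCard, mem_shadow_iterate_iff_exists_sdiff, mem_image]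
  constructor
  · rintro ⟨⟨hDU, hD⟩, a, ha, haD⟩
    obtain ⟨haU, hak⟩ := mem_powersetCard.1 (h𝒜 ha)
    have hDa : D ⊆ U \ a :=
      subset_sdiff.2 ⟨hDU, disjoint_iff_inter_eq_empty.2 (by rwa [inter_comm])⟩
    refine ⟨U \ a, ⟨a, ha, rfl⟩, hDa, ?_⟩
    rw [card_sdiff_of_subset hDa, card_sdiff_of_subset haU]
    omega
  · rintro ⟨_, ⟨a, ha, rfl⟩, hDa, hcard⟩
    obtain ⟨haU, hak⟩ := mem_powersetCard.1 (h𝒜 ha)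
    rw [card_sdiff_of_subset hDa, card_sdiff_of_subset haU] at hcard
    have := card_le_card hDa
    rw [card_sdiff_of_subset haU] at this
    refine ⟨⟨hDa.trans sdiff_subset, by omega⟩, a, ha, ?_⟩
    exact disjoint_iff_inter_eq_empty.1 (disjoint_of_subset_right hDa disjoint_sdiff)

theorem card_image_sdiff {U : Finset α} {𝒜 : Finset (Finset α)} (h𝒜 : ∀ a ∈ 𝒜, a ⊆ U) :
    #(𝒜.image (U \ ·)) = #𝒜 :=
  card_image_le.antisymm <| by
    conv_lhs => rw [← image_sdiff_image_sdiff h𝒜]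
    exact card_image_le

theorem sized_image_sdiff {U : Finset α} {𝒜 : Finset (Finset α)} {k : ℕ}
    (h𝒜 : 𝒜 ⊆ U.powersetCard k) : (↑(𝒜.image (U \ ·)) : Set (Finset α)).Sized (#U - k) := by
  intro b hb
  obtain ⟨a, ha, rfl⟩ := mem_image.1 (mem_coe.1 hb)
  obtain ⟨haU, hak⟩ := mem_powersetCard.1 (h𝒜 ha)
  rw [card_sdiff_of_subset haU, hak]

end Finset

namespace UV

variable {α : Type*} [DecidableEq α]

theorem notMem_and_mem_compress_of_ne {x y : α} {a : Finset α} (h : compress {x} {y} a ≠ a) :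
    x ∉ a ∧ x ∈ compress {x} {y} a := by
  unfold compress at *
  split_ifs at * with hc
  · rw [disjoint_singleton_left] at hc
    refine ⟨hc.1, mem_sdiff.2 ⟨mem_union_right _ (mem_singleton_self x), ?_⟩⟩
    rintro hxy
    rw [mem_singleton.1 hxy] at hc
    exact hc.1 (singleton_subset_iff.1 hc.2)
  · exact absurd rfl h

theorem compress_insert {x y : α} {t : Finset α} (hx : x ∉ insert y t) (hy : y ∉ t) :
    compress {x} {y} (insert y t) = insert x t := by
  rw [compress_of_disjoint_of_le (disjoint_singleton_left.2 hx)
    (singleton_subset_iff.2 (mem_insert_self _ _))]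
  ext z
  simp only [sup_eq_union, mem_sdiff, mem_union, mem_insert, mem_singleton]
  grind

theorem shadow_nonMemberSubfamily_subset {𝒜 : Finset (Finset α)} {x : α}
    (h : ∀ y, 𝓒 {x} {y} 𝒜 = 𝒜) : ∂ (𝒜.nonMemberSubfamily x) ⊆ 𝒜.memberSubfamily x := by
  intro t ht
  simp only [mem_shadow_iff_insert_mem, mem_nonMemberSubfamily] at ht
  obtain ⟨y, hyt, hy𝒜, hxy⟩ := ht
  have := compress_mem_compression (u := {x}) (v := {y}) hy𝒜
  rw [h y, compress_insert hxy hyt] at this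
  exact mem_memberSubfamily.2 ⟨this, fun hxt => hxy (mem_insert_of_mem hxt)⟩

theorem card_nonMemberSubfamily_compression_lt {𝒜 : Finset (Finset α)} {x y : α}
    (h : 𝓒 {x} {y} 𝒜 ≠ 𝒜) :
    #((𝓒 {x} {y} 𝒜).nonMemberSubfamily x) < #(𝒜.nonMemberSubfamily x) := by
  refine card_lt_card ((ssubset_iff_of_subset fun b hb => ?_).2 ?_)
  · rw [mem_nonMemberSubfamily, mem_compression] at hb
    rw [mem_nonMemberSubfamily]
    obtain ⟨⟨hb, -⟩ | ⟨hb, a, ha, rfl⟩, hxb⟩ := hb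
    · exact ⟨hb, hxb⟩
    · exact absurd (notMem_and_mem_compress_of_ne fun h => hb (h ▸ ha)).2 hxb
  · obtain ⟨a, ha, haC⟩ : ∃ a ∈ 𝒜, a ∉ 𝓒 {x} {y} 𝒜 := by
      by_contra! hsub
      exact h (eq_of_subset_of_card_le hsub (card_compression _ _ _).le).symm
    have hca : compress {x} {y} a ≠ a := fun hca =>
      haC (mem_compression.2 (Or.inl ⟨ha, hca.symm ▸ ha⟩))
    exact ⟨a, mem_nonMemberSubfamily.2 ⟨ha, (notMem_and_mem_compress_of_ne hca).1⟩,
      fun haD => haC (mem_nonMemberSubfamily.1 haD).1⟩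

theorem nonMemberSubfamily_compression {u v : Finset α} {z : α} (hu : z ∉ u) (hv : z ∉ v)
    (𝒜 : Finset (Finset α)) :
    (𝓒 u v 𝒜).nonMemberSubfamily z = 𝓒 u v (𝒜.nonMemberSubfamily z) := by
  have hz : ∀ a, z ∈ compress u v a ↔ z ∈ a := by
    intro a
    unfold compress
    split_ifs <;> simp [hu, hv]
  ext b
  simp only [mem_nonMemberSubfamily, mem_compression]
  grind

theorem card_memberSubfamily_compression {u v : Finset α} {z : α} (hu : z ∉ u) (hv : z ∉ v)
    (𝒜 : Finset (Finset α)) :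
    #((𝓒 u v 𝒜).memberSubfamily z) = #(𝒜.memberSubfamily z) := by
  have h𝒞 := card_memberSubfamily_add_card_nonMemberSubfamily z (𝓒 u v 𝒜)
  have h𝒜 := card_memberSubfamily_add_card_nonMemberSubfamily z 𝒜
  rw [nonMemberSubfamily_compression hu hv, card_compression, card_compression] at h𝒞
  omega

theorem card_shadow_compression_singleton_le (x y : α) (𝒜 : Finset (Finset α)) :
    #(∂ (𝓒 {x} {y} 𝒜)) ≤ #(∂ 𝒜) :=
  card_shadow_compression_le _ _ fun x' hx' => ⟨y, mem_singleton_self y, by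
    rw [mem_singleton.1 hx', erase_singleton, erase_singleton]; exact isCompressed_self _ _⟩

end UV

namespace Finset

variable {α : Type*} [DecidableEq α] [Infinite α]

theorem choose_le_card_shadow {𝒜 : Finset (Finset α)} {r m : ℕ} (hr : 1 ≤ r) (hrm : r ≤ m)
    (h𝒜 : (𝒜 : Set (Finset α)).Sized r) (hcard : m.choose r ≤ #𝒜) :
    m.choose (r - 1) ≤ #(∂ 𝒜) :=
  choose_le_card_shadow_iterate (i := 1) hr hrm h𝒜 hcard

theorem card_memberSubfamily_eq_of_card_shadow_le {𝒜 : Finset (Finset α)} {a : α} {r m : ℕ}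
    (hr : 2 ≤ r) (hrm : r ≤ m) (h𝒜 : (𝒜 : Set (Finset α)).Sized r)
    (hlink : (m - 1).choose (r - 1) ≤ #(𝒜.memberSubfamily a))
    (hshadow : #(∂ 𝒜) ≤ m.choose (r - 1)) :
    #(𝒜.memberSubfamily a) = (m - 1).choose (r - 1) ∧
      #(∂ (𝒜.memberSubfamily a)) ≤ (m - 1).choose (r - 2) ∧
      ∂ (𝒜.nonMemberSubfamily a) ⊆ 𝒜.memberSubfamily a := by
  have hsplit := card_shadow_eq_card_shadow_memberSubfamily_add a 𝒜
  set ℒ := 𝒜.memberSubfamily a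
  have hpascal : m.choose (r - 1) = (m - 1).choose (r - 2) + (m - 1).choose (r - 1) := by
    obtain ⟨m, rfl⟩ := Nat.exists_eq_add_of_lt (by omega : 0 < m)
    obtain ⟨r, rfl⟩ := Nat.exists_eq_add_of_le hr
    simp [Nat.choose_succ_succ', add_comm]
  have hℒ : (m - 1).choose (r - 2) ≤ #(∂ ℒ) := by
    simpa [Nat.sub_sub] using
      choose_le_card_shadow (by omega) (by omega) (h𝒜.memberSubfamily a) hlink
  have hunion := card_le_card (subset_union_left : ℒ ⊆ ℒ ∪ ∂ (𝒜.nonMemberSubfamily a))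
  refine ⟨by omega, by omega, union_eq_left.1 ?_⟩
  exact (eq_of_subset_of_card_le subset_union_left (by omega)).symm

theorem le_card_memberSubfamily_of_shadow_subset {𝒜 : Finset (Finset α)} {a : α} {r m : ℕ}
    (hr : 1 ≤ r) (hrm : r < m) (h𝒜 : (𝒜 : Set (Finset α)).Sized r) (hcard : m.choose r ≤ #𝒜)
    (h : ∂ (𝒜.nonMemberSubfamily a) ⊆ 𝒜.memberSubfamily a) :
    (m - 1).choose (r - 1) ≤ #(𝒜.memberSubfamily a) := by
  have hpascal : m.choose r = (m - 1).choose (r - 1) + (m - 1).choose r := by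
    obtain ⟨m, rfl⟩ := Nat.exists_eq_add_of_lt (by omega : 0 < m)
    obtain ⟨r, rfl⟩ := Nat.exists_eq_add_of_le hr
    simp [Nat.choose_succ_succ', add_comm]
  have hsplit := card_memberSubfamily_add_card_nonMemberSubfamily a 𝒜
  by_contra! hlt
  have h𝒟 := choose_le_card_shadow hr (by omega) (h𝒜.nonMemberSubfamily a)
    (by omega : (m - 1).choose r ≤ #(𝒜.nonMemberSubfamily a))
  have := card_le_card h
  omega

theorem exists_eq_powersetCard_of_le_card_memberSubfamily {𝒜 : Finset (Finset α)} {a : α}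
    {r m : ℕ} (hr : 2 ≤ r) (hrm : r ≤ m)
    (hlink : ∀ ℒ : Finset (Finset α), (ℒ : Set (Finset α)).Sized (r - 1) →
      #ℒ = (m - 1).choose (r - 1) → #(∂ ℒ) ≤ (m - 1).choose (r - 2) →
      ∃ W : Finset α, #W = m - 1 ∧ ℒ = W.powersetCard (r - 1))
    (h𝒜 : (𝒜 : Set (Finset α)).Sized r) (hcard : m.choose r ≤ #𝒜)
    (hshadow : #(∂ 𝒜) ≤ m.choose (r - 1))
    (ha : (m - 1).choose (r - 1) ≤ #(𝒜.memberSubfamily a)) :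
    ∃ W : Finset α, #W = m ∧ 𝒜 = W.powersetCard r := by
  obtain ⟨hℒcard, hℒshadow, hsub⟩ :=
    card_memberSubfamily_eq_of_card_shadow_le hr hrm h𝒜 ha hshadow
  obtain ⟨W, hW, hℒ⟩ := hlink _ (h𝒜.memberSubfamily a) hℒcard hℒshadow
  obtain ⟨haW, rfl⟩ := eq_powersetCard_insert hr (by omega) h𝒜 hℒ hsub
    (by rwa [hW, Nat.sub_add_cancel (by omega)])
  exact ⟨insert a W, by rw [card_insert_of_notMem haW, hW]; omega, rfl⟩

/-- `hlink` supplies the case `r - 1`, `m - 1`, applied to links. -/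
theorem exists_eq_powersetCard_of_card_shadow_le_of_link (x : α) {r m : ℕ} (hr : 2 ≤ r)
    (hrm : r ≤ m)
    (hlink : ∀ ℒ : Finset (Finset α), (ℒ : Set (Finset α)).Sized (r - 1) →
      #ℒ = (m - 1).choose (r - 1) → #(∂ ℒ) ≤ (m - 1).choose (r - 2) →
      ∃ W : Finset α, #W = m - 1 ∧ ℒ = W.powersetCard (r - 1))
    {𝒜 : Finset (Finset α)} (h𝒜 : (𝒜 : Set (Finset α)).Sized r) (hcard : m.choose r ≤ #𝒜)
    (hshadow : #(∂ 𝒜) ≤ m.choose (r - 1)) :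
    ∃ W : Finset α, #W = m ∧ 𝒜 = W.powersetCard r := by
  induction h : #(𝒜.nonMemberSubfamily x) using Nat.strong_induction_on generalizing 𝒜 with
  | _ n ih =>
  suffices ∃ z, (m - 1).choose (r - 1) ≤ #(𝒜.memberSubfamily z) from
    this.elim fun z hz =>
      exists_eq_powersetCard_of_le_card_memberSubfamily hr hrm hlink h𝒜 hcard hshadow hz
  obtain rfl | hrm := hrm.eq_or_lt
  · obtain ⟨s, hs⟩ : 𝒜.Nonempty := card_pos.1 (by rw [Nat.choose_self] at hcard; omega)
    obtain ⟨z, hz⟩ : s.Nonempty := card_pos.1 (by rw [h𝒜 hs]; omega)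
    refine ⟨z, ?_⟩
    rw [Nat.choose_self]
    exact card_pos.2 ⟨s.erase z, mem_memberSubfamily.2 ⟨by rwa [insert_erase hz], notMem_erase z s⟩⟩
  by_cases hshift : ∀ y, 𝓒 {x} {y} 𝒜 = 𝒜
  · exact ⟨x, le_card_memberSubfamily_of_shadow_subset (by omega) hrm h𝒜 hcard
      (UV.shadow_nonMemberSubfamily_subset hshift)⟩
  obtain ⟨y, hy⟩ := not_forall.1 hshift
  obtain ⟨W, hW, hℬ⟩ := ih _ (h ▸ UV.card_nonMemberSubfamily_compression_lt hy)
    (h𝒜.uvCompression (by simp)) (by rwa [UV.card_compression])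
    ((UV.card_shadow_compression_singleton_le x y 𝒜).trans hshadow) rfl
  -- The compression `x ← y` leaves the degree of every other vertex unchanged.
  obtain ⟨z, hz⟩ : ((W.erase x).erase y).Nonempty := by
    have := pred_card_le_card_erase (s := W.erase x) (a := y)
    have := pred_card_le_card_erase (s := W) (a := x)
    exact card_pos.1 (by omega)
  simp only [mem_erase] at hz
  refine ⟨z, ?_⟩
  rw [← UV.card_memberSubfamily_compression (u := {x}) (v := {y}) (by simpa using hz.2.1)
    (by simpa using hz.1), hℬ]
  obtain ⟨r, rfl⟩ := Nat.exists_eq_add_of_lt (by omega : 0 < r)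
  rw [zero_add, memberSubfamily_powersetCard hz.2.2, card_powersetCard, card_erase_of_mem hz.2.2,
    hW, Nat.add_sub_cancel]

theorem exists_eq_powersetCard_of_card_shadow_le {𝒜 : Finset (Finset α)} {r m : ℕ} (hr : 2 ≤ r)
    (hrm : r ≤ m) (h𝒜 : (𝒜 : Set (Finset α)).Sized r) (hcard : m.choose r ≤ #𝒜)
    (hshadow : #(∂ 𝒜) ≤ m.choose (r - 1)) :
    ∃ W : Finset α, #W = m ∧ 𝒜 = W.powersetCard r := by
  obtain ⟨x⟩ := (inferInstance : Nonempty α)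
  induction r, hr using Nat.le_induction generalizing m 𝒜 with
  | base =>
    refine exists_eq_powersetCard_of_card_shadow_le_of_link x le_rfl hrm
      (fun ℒ hℒ hℒcard _ => ?_) h𝒜 hcard hshadow
    obtain ⟨W, hW, rfl⟩ := exists_eq_powersetCard_one hℒ
    exact ⟨W, by rw [hW, hℒcard]; exact Nat.choose_one_right _, rfl⟩
  | succ r hr ih =>
    refine exists_eq_powersetCard_of_card_shadow_le_of_link x (by omega) hrm
      (fun ℒ hℒ hℒcard hℒshadow => ?_) h𝒜 hcard hshadow
    exact ih (by omega) hℒ hℒcard.ge (by rwa [show r + 1 - 2 = r - 1 by omega] at hℒshadow)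

theorem exists_eq_powersetCard_of_card_shadow_iterate_le {𝒜 : Finset (Finset α)} {d r m : ℕ}
    (hd : 1 ≤ d) (hdr : d < r) (hrm : r ≤ m) (h𝒜 : (𝒜 : Set (Finset α)).Sized r)
    (hcard : m.choose r ≤ #𝒜) (hshadow : #(∂^[d] 𝒜) ≤ m.choose (r - d)) :
    ∃ W : Finset α, #W = m ∧ 𝒜 = W.powersetCard r := by
  induction d, hd using Nat.le_induction generalizing r 𝒜 with
  | base => exact exists_eq_powersetCard_of_card_shadow_le hdr hrm h𝒜 hcard (by simpa using hshadow)
  | succ d hd ih =>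
    rw [Function.iterate_succ_apply] at hshadow
    obtain ⟨W, hW, hshadow𝒜⟩ := ih (by omega) (by omega) h𝒜.shadow
      (choose_le_card_shadow (by omega) hrm h𝒜 hcard) (by rwa [Nat.sub_sub, Nat.add_comm 1])
    have hsub := subset_powersetCard_of_shadow_subset (by omega) h𝒜 hshadow𝒜.le
    exact ⟨W, hW, eq_of_subset_of_card_le hsub (by rwa [card_powersetCard, hW])⟩

end Finset

theorem stmt_14_general (n k l s : ℕ) (hl : 0 < l) (hn : k + l < n)
    (hsk : s ≤ k)
    (A : Finset (Finset ℕ)) (hA : A ⊆ (Finset.Icc 1 n).powersetCard k)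
    (hcard : A.card = (n - s).choose (k - s)) :
    (n - s).choose l
        ≤ (((Finset.Icc 1 n).powersetCard l).filter (fun D => ∃ a ∈ A, a ∩ D = ∅)).card
    ∧ ((((Finset.Icc 1 n).powersetCard l).filter (fun D => ∃ a ∈ A, a ∩ D = ∅)).card
          = (n - s).choose l
        ↔ ∃ S ∈ (Finset.Icc 1 n).powersetCard s,
            A = ((Finset.Icc 1 n).powersetCard k).filter (fun F => S ⊆ F)) := by
  set U := Finset.Icc 1 n
  have hU : #U = n := by simp [U]
  have hAU : ∀ a ∈ A, a ⊆ U := fun a ha => (mem_powersetCard.1 (hA ha)).1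
  rw [filter_exists_disjoint_eq_shadow_iterate hA (by omega), hU]
  have hB : (↑(A.image (U \ ·)) : Set (Finset ℕ)).Sized (n - k) := hU ▸ sized_image_sdiff hA
  have hBcard : (n - s).choose (n - k) ≤ #(A.image (U \ ·)) := by
    rw [card_image_sdiff hAU, hcard, Nat.choose_symm_of_eq_add (by omega : n - s = k - s + (n - k))]
  have hl' : n - k - (n - k - l) = l := by omega
  refine ⟨?_, fun heq => ?_, ?_⟩
  · simpa [hl'] using
      choose_le_card_shadow_iterate (i := n - k - l) (by omega) (by omega) hB hBcard
  · obtain ⟨W, hW, hBW⟩ := exists_eq_powersetCard_of_card_shadow_iterate_le (d := n - k - l)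
      (by omega) (by omega) (by omega) hB hBcard (by rw [heq, hl'])
    rw [← hU] at hBW
    simpa [hU, hW, show n - (n - s) = s by omega] using
      exists_eq_filter_subset_of_image_sdiff_eq_powersetCard hA (by omega) (by omega) hBW
  · rintro ⟨S, hS, rfl⟩
    obtain ⟨hSU, hScard⟩ := mem_powersetCard.1 hS
    rw [image_sdiff_filter_subset hSU (by omega), hU,
      shadow_iterate_powersetCard (by omega) (by rw [card_sdiff_of_subset hSU]; omega),
      card_powersetCard, card_sdiff_of_subset hSU, hU, hScard, hl']

theorem stmt_14 (n k l s : ℕ) (hk : 0 < k) (hl : 0 < l) (hn : k + l < n)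
    (hs1 : 1 ≤ s) (hsk : s ≤ k)
    (A : Finset (Finset ℕ)) (hA : A ⊆ (Finset.Icc 1 n).powersetCard k)
    (hcard : A.card = (n - s).choose (k - s)) :
    (n - s).choose l
        ≤ (((Finset.Icc 1 n).powersetCard l).filter (fun D => ∃ a ∈ A, a ∩ D = ∅)).card
    ∧ ((((Finset.Icc 1 n).powersetCard l).filter (fun D => ∃ a ∈ A, a ∩ D = ∅)).card
          = (n - s).choose l
        ↔ ∃ S ∈ (Finset.Icc 1 n).powersetCard s,
            A = ((Finset.Icc 1 n).powersetCard k).filter (fun F => S ⊆ F)) :=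
  stmt_14_general n k l s hl hn hsk A hA hcard
end

section
/- If A ⊆ C([n],k) and B ⊆ C([n],l) are cross-intersecting families, then the L-initial families A_L and B_L (consisting of the first |A| sets of C([n],k) and the first |B| sets of C([n],l) in lexicographic order, respectively) are also cross-intersecting. -/
/-!
Reflect `[1, n]` onto `Fin n` by `i ↦ n - i`. This turns the lexicographic order into the reverse
of Mathlib's colex order, so lex-initial families become colex-final ones, and a colex-final family
of `k`-sets is the family of complements of a colex-initial family of `(n - k)`-sets.

A `k`-set `a` and an `l`-set `b` are disjoint iff `b` lies in the `(n - k - l)`-th shadow of `{aᶜ}`.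
Hence `A`, `B` cross-intersecting means that `B` misses `∂^(n-k-l) Aᶜ`, so
`|B| + |∂^(n-k-l) Aᶜ| ≤ C(n, l)`, and by Kruskal–Katona the same bound holds with `A` replaced by
the initial family `A_L`. If some `a ∈ A_L` and `b ∈ B_L` were disjoint, then `b` would lie in both
the colex-initial family `∂^(n-k-l) A_Lᶜ` and the colex-final family `B_L`; together these would
cover every `l`-set and overlap, giving `|B| + |∂^(n-k-l) A_Lᶜ| > C(n, l)`.
-/

def lexLt (A B : Finset ℕ) : Prop := (A \ B).min < (B \ A).min

open Finset Finset.Colex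
open scoped FinsetFamily

namespace Finset.Colex

variable {α : Type*} [LinearOrder α]

def IsFinalSeg (𝒜 : Finset (Finset α)) (r : ℕ) : Prop :=
  (𝒜 : Set (Finset α)).Sized r ∧
    ∀ ⦃s t : Finset α⦄, s ∈ 𝒜 → toColex s < toColex t ∧ #t = r → t ∈ 𝒜

lemma IsInitSeg.shadow_iterate [Finite α] {𝒜 : Finset (Finset α)} {r : ℕ} (h : IsInitSeg 𝒜 r) :
    ∀ j, IsInitSeg (∂^[j] 𝒜) (r - j)
  | 0 => by simpa using h
  | j + 1 => by
    rw [Function.iterate_succ_apply', ← Nat.sub_sub]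
    exact (h.shadow_iterate j).shadow

variable [Fintype α]

lemma toColex_compl_lt_toColex_compl {s t : Finset α} :
    toColex sᶜ < toColex tᶜ ↔ toColex t < toColex s := by
  simp only [toColex_lt_toColex_iff_exists_forall_lt, mem_compl, not_not]
  exact exists_congr fun a => by tauto

lemma IsFinalSeg.isInitSeg_compls {𝒜 : Finset (Finset α)} {r : ℕ} (h : IsFinalSeg 𝒜 r) :
    IsInitSeg 𝒜ᶜˢ (Fintype.card α - r) := by
  refine ⟨by simpa using h.1.compls, fun s t hs ⟨hts, ht⟩ => ?_⟩
  rw [mem_compls] at hs ⊢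
  refine h.2 hs ⟨toColex_compl_lt_toColex_compl.2 hts, ?_⟩
  rw [card_compl, ht, Nat.sub_sub_self (h.1 hs ▸ card_le_univ _)]

variable {𝒜 ℬ 𝒞 𝒟 : Finset (Finset α)} {k l : ℕ}

lemma mem_shadow_iterate_compls_iff (h𝒜 : (𝒜 : Set (Finset α)).Sized k) {t : Finset α}
    (ht : #t = l) (hkl : k + l ≤ Fintype.card α) :
    t ∈ ∂^[Fintype.card α - k - l] 𝒜ᶜˢ ↔ ∃ s ∈ 𝒜, Disjoint s t := by
  simp only [mem_shadow_iterate_iff_exists_mem_card_add, mem_compls]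
  constructor
  · rintro ⟨u, hu, htu, -⟩
    exact ⟨uᶜ, hu, disjoint_compl_left.mono_right htu⟩
  · rintro ⟨s, hs, hst⟩
    refine ⟨sᶜ, by rwa [compl_compl], subset_compl_iff_disjoint_left.2 hst, ?_⟩
    rw [card_compl, h𝒜 hs, ht]
    omega

lemma card_add_card_shadow_iterate_compls_le (h𝒜 : (𝒜 : Set (Finset α)).Sized k)
    (hℬ : (ℬ : Set (Finset α)).Sized l) (hcross : ∀ a ∈ 𝒜, ∀ b ∈ ℬ, (a ∩ b).Nonempty)
    (hkl : k + l ≤ Fintype.card α) :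
    #ℬ + #(∂^[Fintype.card α - k - l] 𝒜ᶜˢ) ≤ (Fintype.card α).choose l := by
  have hdisj : Disjoint ℬ (∂^[Fintype.card α - k - l] 𝒜ᶜˢ) := disjoint_left.2 fun b hb hb' => by
    obtain ⟨a, ha, hab⟩ := (mem_shadow_iterate_compls_iff h𝒜 (hℬ hb) hkl).1 hb'
    exact not_disjoint_iff_nonempty_inter.2 (hcross a ha b hb) hab
  have hshadow : (∂^[Fintype.card α - k - l] 𝒜ᶜˢ : Set (Finset α)).Sized l := fun t ht => by
    have := h𝒜.compls.shadow_iterate ht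
    omega
  rw [← card_union_of_disjoint hdisj]
  exact Set.Sized.card_le (by rw [coe_union, Set.sized_union]; exact ⟨hℬ, hshadow⟩)

lemma choose_lt_card_add_card_of_mem_inter (h𝒞 : IsInitSeg 𝒞 l) (h𝒟 : IsFinalSeg 𝒟 l)
    {x : Finset α} (hx𝒞 : x ∈ 𝒞) (hx𝒟 : x ∈ 𝒟) : (Fintype.card α).choose l < #𝒞 + #𝒟 := by
  have hcover : powersetCard l univ ⊆ 𝒞 ∪ 𝒟 := fun y hy => by
    rw [mem_powersetCard_univ] at hy
    rw [mem_union]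
    rcases lt_trichotomy (toColex y) (toColex x) with h | h | h
    · exact Or.inl (h𝒞.2 hx𝒞 ⟨h, hy⟩)
    · exact Or.inl (toColex_inj.1 h ▸ hx𝒞)
    · exact Or.inr (h𝒟.2 hx𝒟 ⟨h, hy⟩)
  calc (Fintype.card α).choose l = #(powersetCard l (univ : Finset α)) :=
        (card_powersetCard ..).symm
    _ ≤ #(𝒞 ∪ 𝒟) := card_le_card hcover
    _ < #(𝒞 ∪ 𝒟) + #(𝒞 ∩ 𝒟) :=
        Nat.lt_add_of_pos_right (card_pos.2 ⟨x, mem_inter.2 ⟨hx𝒞, hx𝒟⟩⟩)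
    _ = #𝒞 + #𝒟 := card_union_add_card_inter _ _

end Finset.Colex

theorem kruskal_katona_cross_intersecting {n k l : ℕ} {𝒜 ℬ 𝒜' ℬ' : Finset (Finset (Fin n))}
    (h𝒜 : (𝒜 : Set (Finset (Fin n))).Sized k) (hℬ : (ℬ : Set (Finset (Fin n))).Sized l)
    (hcross : ∀ a ∈ 𝒜, ∀ b ∈ ℬ, (a ∩ b).Nonempty) (h𝒜' : IsFinalSeg 𝒜' k)
    (hℬ' : IsFinalSeg ℬ' l) (h𝒜𝒜' : #𝒜' ≤ #𝒜) (hℬℬ' : #ℬ' ≤ #ℬ) :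
    ∀ a ∈ 𝒜', ∀ b ∈ ℬ', (a ∩ b).Nonempty := by
  intro a ha b hb
  by_contra hab
  rw [← not_disjoint_iff_nonempty_inter, not_not] at hab
  have hkl : k + l ≤ Fintype.card (Fin n) := by
    by_contra! hlt
    refine not_disjoint_iff_nonempty_inter.2 ?_ hab
    refine inter_nonempty_of_card_lt_card_add_card (subset_univ a) (subset_univ b) ?_
    rwa [card_univ, h𝒜'.1 ha, hℬ'.1 hb]
  have h𝒞 := h𝒜'.isInitSeg_compls.shadow_iterate (Fintype.card (Fin n) - k - l)
  rw [Nat.sub_sub_self (by omega)] at h𝒞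
  have hb𝒞 := (mem_shadow_iterate_compls_iff h𝒜'.1 (hℬ'.1 hb) hkl).2 ⟨a, ha, hab⟩
  have hKK := iterated_kk (k := Fintype.card (Fin n) - k - l) h𝒜.compls
    (by rwa [card_compls, card_compls]) h𝒜'.isInitSeg_compls
  have := choose_lt_card_add_card_of_mem_inter h𝒞 hℬ' hb𝒞 hb
  have := card_add_card_shadow_iterate_compls_le h𝒜 hℬ hcross hkl
  omega

lemma lexLt_iff_exists_forall_lt {s t : Finset ℕ} :
    lexLt s t ↔ ∃ a ∈ s, a ∉ t ∧ ∀ b ∈ t, b ∉ s → a < b := by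
  unfold lexLt
  constructor
  · intro h
    obtain ⟨a, ha⟩ := WithTop.ne_top_iff_exists.1 h.ne_top
    obtain ⟨has, hat⟩ := mem_sdiff.1 (mem_of_min ha.symm)
    refine ⟨a, has, hat, fun b hbt hbs => ?_⟩
    exact WithTop.coe_lt_coe.1 (ha ▸ h.trans_le (min_le (mem_sdiff.2 ⟨hbt, hbs⟩)))
  · rintro ⟨a, has, hat, ha⟩
    refine (min_le (mem_sdiff.2 ⟨has, hat⟩)).trans_lt ?_
    cases h : (t \ s).min with
    | top => exact WithTop.coe_lt_top a
    | coe b =>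
      obtain ⟨hbt, hbs⟩ := mem_sdiff.1 (mem_of_min h)
      exact WithTop.coe_lt_coe.2 (ha b hbt hbs)

lemma lexLt_map_iff {α : Type*} [LinearOrder α] {f : α ↪ ℕ} (hf : StrictAnti f)
    {s t : Finset α} : lexLt (s.map f) (t.map f) ↔ toColex t < toColex s := by
  simp [lexLt_iff_exists_forall_lt, toColex_lt_toColex_iff_exists_forall_lt, hf.lt_iff_gt]

lemma Finset.Colex.isFinalSeg_of_lexLt {α : Type*} [LinearOrder α] [Fintype α] {f : α ↪ ℕ}
    (hf : StrictAnti f) {k : ℕ} {𝒜 : Finset (Finset α)} (h𝒜 : 𝒜 ⊆ powersetCard k univ)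
    (hinit : ∀ s ∈ 𝒜, ∀ t ∈ powersetCard k univ, lexLt (t.map f) (s.map f) → t ∈ 𝒜) :
    IsFinalSeg 𝒜 k :=
  ⟨subset_powersetCard_univ_iff.1 h𝒜, fun s t hs ⟨hst, ht⟩ =>
    hinit s hs t (mem_powersetCard_univ.2 ht) ((lexLt_map_iff hf).2 hst)⟩

def revEmb (n : ℕ) : Fin n ↪ ℕ :=
  ⟨fun x => n - x, fun x y h => Fin.ext (by have := x.isLt; have := y.isLt; dsimp only at h; omega)⟩

@[simp] lemma revEmb_apply {n : ℕ} (x : Fin n) : revEmb n x = n - x := rfl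

lemma revEmb_strictAnti (n : ℕ) : StrictAnti (revEmb n) := fun x y h => by
  have := y.isLt
  simp only [revEmb_apply]
  omega

lemma map_revEmb_univ (n : ℕ) : univ.map (revEmb n) = Icc 1 n := by
  ext i
  simp only [mem_map, mem_univ, true_and, mem_Icc, revEmb_apply]
  constructor
  · rintro ⟨x, rfl⟩
    omega
  · rintro ⟨h1, h2⟩
    exact ⟨⟨n - i, by omega⟩, Nat.sub_sub_self h2⟩

theorem stmt_15 (n k l : ℕ)
    (A B AL BL : Finset (Finset ℕ))
    (hA : A ⊆ (Finset.Icc 1 n).powersetCard k)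
    (hB : B ⊆ (Finset.Icc 1 n).powersetCard l)
    (hcross : ∀ a ∈ A, ∀ b ∈ B, (a ∩ b).Nonempty)
    (hAL : AL ⊆ (Finset.Icc 1 n).powersetCard k)
    (hBL : BL ⊆ (Finset.Icc 1 n).powersetCard l)
    (hALcard : AL.card = A.card) (hBLcard : BL.card = B.card)
    (hALinit : ∀ X ∈ AL, ∀ Y ∈ (Finset.Icc 1 n).powersetCard k, lexLt Y X → Y ∈ AL)
    (hBLinit : ∀ X ∈ BL, ∀ Y ∈ (Finset.Icc 1 n).powersetCard l, lexLt Y X → Y ∈ BL) :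
    ∀ a ∈ AL, ∀ b ∈ BL, (a ∩ b).Nonempty := by
  rw [← map_revEmb_univ, powersetCard_map] at hA hB hAL hBL hALinit hBLinit
  obtain ⟨𝒜, h𝒜, rfl⟩ := subset_map_iff.1 hA
  obtain ⟨ℬ, hℬ, rfl⟩ := subset_map_iff.1 hB
  obtain ⟨𝒜', h𝒜', rfl⟩ := subset_map_iff.1 hAL
  obtain ⟨ℬ', hℬ', rfl⟩ := subset_map_iff.1 hBL
  simp only [forall_mem_map, mem_map'] at hcross hALinit hBLinit ⊢
  simp only [RelEmbedding.coe_toEmbedding, mapEmbedding_apply, ← map_inter, map_nonempty,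
    card_map] at hcross hALcard hBLcard hALinit hBLinit ⊢
  have hrev := revEmb_strictAnti n
  exact kruskal_katona_cross_intersecting (subset_powersetCard_univ_iff.1 h𝒜)
    (subset_powersetCard_univ_iff.1 hℬ) hcross (isFinalSeg_of_lexLt hrev h𝒜' hALinit)
    (isFinalSeg_of_lexLt hrev hℬ' hBLinit) hALcard.le hBLcard.le
end

section
/- Let r > 2 and let n, h, K be positive integers with n = h + K. Suppose F_0 ⊆ C([n],K) and F_1, ..., F_{r-1} ⊆ C([n],h) are non-empty cross-intersecting families with |F_0| ≥ C(n-1, K-1). Then |F_0| + Σ_{i=1}^{r-1} |F_i| ≤ C(n-1, K-1) + (r-1)·C(n-1, h-1), with equality only if there is an intersecting family F ⊆ C([n],h) with |F| = C(n-1,h-1) such that F_i = F for all 1 ≤ i ≤ r-1 and F_0 = C([n],K) \ {[n] \ F : F ∈ F}. -/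
/-!
Inside a ground set `U` with `#U = k + l`, taking complements in `U` is a bijection between the
`k`-subsets and the `l`-subsets, and an `l`-set meets every member of a family `𝒜` of `k`-sets
exactly when its complement is not in `𝒜`. So each `Fᵢ` avoids the complements of `F₀`, whence
`|F₀| + |Fᵢ| ≤ C(n, h) = C(n-1, K-1) + C(n-1, h-1)`. Summing over the `r - 1 ≥ 2` indices and using
`|F₀| ≥ C(n-1, K-1)` gives the bound, and equality forces `|F₀| = C(n-1, K-1)` and every `Fᵢ` to be
the whole family of `h`-sets whose complement is not in `F₀`; applying the same argument with the
roles of `F₀` and `Fᵢ` exchanged recovers `F₀` from it.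
-/

open Finset

theorem Nat.choose_add_eq_choose_sub_one_add_choose_sub_one {m n : ℕ} (hm : 0 < m) (hn : 0 < n) :
    (m + n).choose m = (m + n - 1).choose (m - 1) + (m + n - 1).choose (n - 1) := by
  obtain ⟨a, rfl⟩ : ∃ a, m = a + 1 := ⟨m - 1, by omega⟩
  obtain ⟨b, rfl⟩ : ∃ b, n = b + 1 := ⟨n - 1, by omega⟩
  have hsymm : (a + b + 1).choose (a + 1) = (a + b + 1).choose b := by
    rw [show a + b + 1 = a + 1 + b by omega, Nat.choose_symm_add]
  rw [show a + 1 + (b + 1) = a + b + 1 + 1 by omega, Nat.choose_succ_succ', hsymm]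
  simp only [Nat.add_sub_cancel]

namespace Finset

variable {α : Type*} [DecidableEq α] {U A : Finset α} {k l : ℕ} {𝒜 ℬ : Finset (Finset α)}

theorem sdiff_mem_powersetCard (hkl : k + l = #U) (hA : A ∈ U.powersetCard k) :
    U \ A ∈ U.powersetCard l := by
  rw [mem_powersetCard] at hA ⊢
  refine ⟨sdiff_subset, ?_⟩
  rw [card_sdiff_of_subset hA.1, hA.2]
  omega

theorem card_image_sdiff_s16 (h𝒜 : 𝒜 ⊆ U.powersetCard k) : #(𝒜.image (U \ ·)) = #𝒜 := by
  refine card_image_of_injOn fun A hA B hB hAB => ?_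
  have hAU := (mem_powersetCard.1 (h𝒜 hA)).1
  have hBU := (mem_powersetCard.1 (h𝒜 hB)).1
  rw [← sdiff_sdiff_eq_self hAU, ← sdiff_sdiff_eq_self hBU]
  exact congrArg (U \ ·) hAB

theorem card_powersetCard_sdiff_image_sdiff (hkl : k + l = #U) (h𝒜 : 𝒜 ⊆ U.powersetCard k) :
    #(U.powersetCard l \ 𝒜.image (U \ ·)) = (#U).choose l - #𝒜 := by
  have himage : 𝒜.image (U \ ·) ⊆ U.powersetCard l := by
    simpa only [image_subset_iff] using fun A hA => sdiff_mem_powersetCard hkl (h𝒜 hA)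
  rw [card_sdiff_of_subset himage, card_image_sdiff_s16 h𝒜, card_powersetCard]

theorem subset_powersetCard_sdiff_image_sdiff (hℬ : ℬ ⊆ U.powersetCard l)
    (hcross : ∀ A ∈ 𝒜, ∀ B ∈ ℬ, (A ∩ B).Nonempty) :
    ℬ ⊆ U.powersetCard l \ 𝒜.image (U \ ·) := by
  intro B hB
  refine mem_sdiff.2 ⟨hℬ hB, fun hmem => ?_⟩
  obtain ⟨A, hA, rfl⟩ := mem_image.1 hmem
  obtain ⟨x, hx⟩ := hcross A hA _ hB
  rw [mem_inter, mem_sdiff] at hx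
  exact hx.2.2 hx.1

theorem card_add_card_le_choose_of_cross (hkl : k + l = #U) (h𝒜 : 𝒜 ⊆ U.powersetCard k)
    (hℬ : ℬ ⊆ U.powersetCard l) (hcross : ∀ A ∈ 𝒜, ∀ B ∈ ℬ, (A ∩ B).Nonempty) :
    #𝒜 + #ℬ ≤ (#U).choose l := by
  have hcard := card_le_card (subset_powersetCard_sdiff_image_sdiff hℬ hcross)
  have h𝒜card : #𝒜 ≤ (#U).choose k := (card_le_card h𝒜).trans_eq (card_powersetCard _ _)
  rw [card_powersetCard_sdiff_image_sdiff hkl h𝒜] at hcard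
  rw [← hkl, Nat.choose_symm_add, hkl] at h𝒜card
  omega

theorem eq_powersetCard_sdiff_image_sdiff_of_cross (hkl : k + l = #U)
    (h𝒜 : 𝒜 ⊆ U.powersetCard k) (hℬ : ℬ ⊆ U.powersetCard l)
    (hcross : ∀ A ∈ 𝒜, ∀ B ∈ ℬ, (A ∩ B).Nonempty) (hcard : #𝒜 + #ℬ = (#U).choose l) :
    ℬ = U.powersetCard l \ 𝒜.image (U \ ·) := by
  refine eq_of_subset_of_card_le (subset_powersetCard_sdiff_image_sdiff hℬ hcross) ?_
  rw [card_powersetCard_sdiff_image_sdiff hkl h𝒜]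
  omega

variable {ι : Type*} {s : Finset ι} {a c₁ c₂ : ℕ} {b : ι → ℕ}

/-- The excess `a - c₁` is paid once on the left but `#s` times on the right. -/
theorem add_sum_le_of_add_le (hs : s.Nonempty) (ha : c₁ ≤ a)
    (hb : ∀ i ∈ s, a + b i ≤ c₁ + c₂) : a + ∑ i ∈ s, b i ≤ c₁ + #s * c₂ := by
  obtain ⟨d, rfl⟩ := Nat.exists_eq_add_of_le ha
  have hsum : ∑ i ∈ s, (d + b i) ≤ ∑ _i ∈ s, c₂ :=
    sum_le_sum fun i hi => by have := hb i hi; omega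
  rw [sum_add_distrib, sum_const, sum_const, smul_eq_mul, smul_eq_mul] at hsum
  have : d ≤ #s * d := Nat.le_mul_of_pos_left d (card_pos.2 hs)
  omega

theorem eq_of_add_sum_eq (hs : 2 ≤ #s) (ha : c₁ ≤ a)
    (hb : ∀ i ∈ s, a + b i ≤ c₁ + c₂) (heq : a + ∑ i ∈ s, b i = c₁ + #s * c₂) :
    a = c₁ ∧ ∀ i ∈ s, b i = c₂ := by
  obtain ⟨d, rfl⟩ := Nat.exists_eq_add_of_le ha
  have hbi : ∀ i ∈ s, d + b i ≤ c₂ := fun i hi => by have := hb i hi; omega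
  have hsum : ∑ i ∈ s, (d + b i) ≤ ∑ _i ∈ s, c₂ := sum_le_sum hbi
  rw [sum_add_distrib, sum_const, sum_const, smul_eq_mul, smul_eq_mul] at hsum
  have hd : d = 0 := by nlinarith
  subst hd
  refine ⟨rfl, (sum_eq_sum_iff_of_le fun i hi => ?_).1 ?_⟩
  · simpa using hbi i hi
  · rw [sum_const, smul_eq_mul]; omega

end Finset

theorem stmt_16_general (r n h K : ℕ) (hr : 2 < r) (hh : 0 < h) (hK : 0 < K) (hn : n = h + K)
    (F₀ : Finset (Finset ℕ)) (F : ℕ → Finset (Finset ℕ))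
    (hF₀ : F₀ ⊆ (Finset.Icc 1 n).powersetCard K)
    (hF : ∀ i ∈ Finset.Icc 1 (r - 1), F i ⊆ (Finset.Icc 1 n).powersetCard h)
    (hbig : (n - 1).choose (K - 1) ≤ F₀.card)
    (hcross₀ : ∀ i ∈ Finset.Icc 1 (r - 1), ∀ A ∈ F₀, ∀ B ∈ F i, (A ∩ B).Nonempty)
    (hcross : ∀ i ∈ Finset.Icc 1 (r - 1), ∀ j ∈ Finset.Icc 1 (r - 1), i ≠ j →
      ∀ A ∈ F i, ∀ B ∈ F j, (A ∩ B).Nonempty) :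
    F₀.card + ∑ i ∈ Finset.Icc 1 (r - 1), (F i).card
      ≤ (n - 1).choose (K - 1) + (r - 1) * (n - 1).choose (h - 1)
    ∧ (F₀.card + ∑ i ∈ Finset.Icc 1 (r - 1), (F i).card
          = (n - 1).choose (K - 1) + (r - 1) * (n - 1).choose (h - 1)
        → ∃ G : Finset (Finset ℕ), G ⊆ (Finset.Icc 1 n).powersetCard h
            ∧ (∀ A ∈ G, ∀ B ∈ G, (A ∩ B).Nonempty)
            ∧ G.card = (n - 1).choose (h - 1)
            ∧ (∀ i ∈ Finset.Icc 1 (r - 1), F i = G)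
            ∧ F₀ = ((Finset.Icc 1 n).powersetCard K) \ G.image (fun g => Finset.Icc 1 n \ g)) := by
  set U := Icc 1 n
  have hU : K + h = #U := by rw [Nat.card_Icc]; omega
  have hchoose : (#U).choose h = (n - 1).choose (K - 1) + (n - 1).choose (h - 1) := by
    rw [← hU, add_comm, Nat.choose_add_eq_choose_sub_one_add_choose_sub_one hh hK, hn, add_comm]
  have hs : #(Icc 1 (r - 1)) = r - 1 := by simp
  have hpair : ∀ i ∈ Icc 1 (r - 1), #F₀ + #(F i) ≤ (n - 1).choose (K - 1) + (n - 1).choose (h - 1) :=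
    fun i hi => hchoose ▸ card_add_card_le_choose_of_cross hU hF₀ (hF i hi) (hcross₀ i hi)
  have h1 : 1 ∈ Icc 1 (r - 1) := mem_Icc.2 ⟨le_rfl, by omega⟩
  have h2 : 2 ∈ Icc 1 (r - 1) := mem_Icc.2 ⟨by omega, by omega⟩
  have hle := add_sum_le_of_add_le ⟨1, h1⟩ hbig hpair
  rw [hs] at hle
  refine ⟨hle, fun hsum => ?_⟩
  obtain ⟨hF₀card, hFcard⟩ := eq_of_add_sum_eq (by omega) hbig hpair (by rwa [hs])
  have hFG : ∀ i ∈ Icc 1 (r - 1), F i = U.powersetCard h \ F₀.image (U \ ·) := fun i hi =>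
    eq_powersetCard_sdiff_image_sdiff_of_cross hU hF₀ (hF i hi) (hcross₀ i hi)
      (by rw [hchoose, hF₀card, hFcard i hi])
  refine ⟨F 1, hF 1 h1, fun A hA B hB => ?_, hFcard 1 h1, fun i hi => ?_, ?_⟩
  · rw [hFG 1 h1, ← hFG 2 h2] at hB
    exact hcross 1 h1 2 h2 (by omega) A hA B hB
  · rw [hFG i hi, hFG 1 h1]
  · refine eq_powersetCard_sdiff_image_sdiff_of_cross (by omega) (hF 1 h1) hF₀
      (fun A hA B hB => inter_comm A B ▸ hcross₀ 1 h1 B hB A hA) ?_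
    rw [hFcard 1 h1, ← hU, Nat.choose_symm_add, hU, hchoose]
    omega

theorem stmt_16 (r n h K : ℕ) (hr : 2 < r) (hh : 0 < h) (hK : 0 < K) (hn : n = h + K)
    (F₀ : Finset (Finset ℕ)) (F : ℕ → Finset (Finset ℕ))
    (hF₀ : F₀ ⊆ (Finset.Icc 1 n).powersetCard K)
    (hF : ∀ i ∈ Finset.Icc 1 (r - 1), F i ⊆ (Finset.Icc 1 n).powersetCard h)
    (hne₀ : F₀.Nonempty) (hne : ∀ i ∈ Finset.Icc 1 (r - 1), (F i).Nonempty)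
    (hbig : (n - 1).choose (K - 1) ≤ F₀.card)
    (hcross₀ : ∀ i ∈ Finset.Icc 1 (r - 1), ∀ A ∈ F₀, ∀ B ∈ F i, (A ∩ B).Nonempty)
    (hcross : ∀ i ∈ Finset.Icc 1 (r - 1), ∀ j ∈ Finset.Icc 1 (r - 1), i ≠ j →
      ∀ A ∈ F i, ∀ B ∈ F j, (A ∩ B).Nonempty) :
    F₀.card + ∑ i ∈ Finset.Icc 1 (r - 1), (F i).card
      ≤ (n - 1).choose (K - 1) + (r - 1) * (n - 1).choose (h - 1)
    ∧ (F₀.card + ∑ i ∈ Finset.Icc 1 (r - 1), (F i).card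
          = (n - 1).choose (K - 1) + (r - 1) * (n - 1).choose (h - 1)
        → ∃ G : Finset (Finset ℕ), G ⊆ (Finset.Icc 1 n).powersetCard h
            ∧ (∀ A ∈ G, ∀ B ∈ G, (A ∩ B).Nonempty)
            ∧ G.card = (n - 1).choose (h - 1)
            ∧ (∀ i ∈ Finset.Icc 1 (r - 1), F i = G)
            ∧ F₀ = ((Finset.Icc 1 n).powersetCard K) \ G.image (fun g => Finset.Icc 1 n \ g)) :=
  stmt_16_general r n h K hr hh hK hn F₀ F hF₀ hF hbig hcross₀ hcross
end

section
/- Let n, k, l be positive integers with n ≥ 2k and let F_1 ⊆ C([n],k), F_2 ⊆ C([n],k) be cross-intersecting families (possibly empty). If 2 ≤ n/k (i.e., n ≥ 2k), then |F_1| + |F_2| ≤ max{ C(n,k), 2·C(n-1,k-1) }. -/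
/-!
Replace `F₂` by the family `𝒞` of complements `[n] \ B`, which are `(n - k)`-sets. A `k`-set lying
inside some `[n] \ B` misses `B`, so it cannot belong to `F₁`: `F₁` is disjoint from the `k`-shadow
of `𝒞`. Double counting the pairs `S ⊆ C` with `C ∈ 𝒞` and `#S = k` shows that, as `k ≤ n - k`,
this shadow is at least as large as `𝒞`. Hence `#F₁ + #F₂ ≤ C(n, k)`.
-/

open Finset

namespace Finset

variable {α : Type*} [DecidableEq α]

lemma card_filter_superset_le {X S : Finset α} {𝒞 : Finset (Finset α)} {m : ℕ}
    (h𝒞 : 𝒞 ⊆ X.powersetCard m) (hSX : S ⊆ X) :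
    #{C ∈ 𝒞 | S ⊆ C} ≤ (#X - #S).choose (m - #S) := by
  rw [← card_sdiff_of_subset hSX, ← card_powersetCard]
  refine card_le_card_of_injOn (· \ S) (fun C hC => ?_) (fun C₁ hC₁ C₂ hC₂ h => ?_)
  · obtain ⟨hC𝒞, hSC⟩ := mem_filter.1 hC
    obtain ⟨hCX, hCm⟩ := mem_powersetCard.1 (h𝒞 hC𝒞)
    exact mem_powersetCard.2 ⟨sdiff_subset_sdiff hCX le_rfl, by rw [card_sdiff_of_subset hSC, hCm]⟩
  · rw [← sdiff_union_of_subset (mem_filter.1 hC₁).2, ← sdiff_union_of_subset (mem_filter.1 hC₂).2]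
    exact congrArg (· ∪ S) h

lemma card_mul_choose_le_card_biUnion_powersetCard_mul {X : Finset α} {𝒞 : Finset (Finset α)}
    {m : ℕ} (k : ℕ) (h𝒞 : 𝒞 ⊆ X.powersetCard m) :
    #𝒞 * m.choose k ≤ #(𝒞.biUnion (powersetCard k)) * (#X - k).choose (m - k) := by
  refine card_mul_le_card_mul (fun C S => S ⊆ C) (fun C hC => ?_) (fun S hS => ?_)
  · have habove : bipartiteAbove (fun C S => S ⊆ C) (𝒞.biUnion (powersetCard k)) C
        = C.powersetCard k := by
      ext S
      simp only [bipartiteAbove, mem_filter, mem_biUnion, mem_powersetCard]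
      exact ⟨fun ⟨⟨_, _, _, hSk⟩, hSC⟩ => ⟨hSC, hSk⟩, fun hS => ⟨⟨C, hC, hS⟩, hS.1⟩⟩
    rw [habove, card_powersetCard, (mem_powersetCard.1 (h𝒞 hC)).2]
  · obtain ⟨C, hC, hSC, hSk⟩ := by simpa only [mem_biUnion, mem_powersetCard] using hS
    have hSX : S ⊆ X := hSC.trans (mem_powersetCard.1 (h𝒞 hC)).1
    exact hSk ▸ card_filter_superset_le h𝒞 hSX

lemma card_le_card_biUnion_powersetCard {X : Finset α} {𝒞 : Finset (Finset α)} {k : ℕ}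
    (hk : 2 * k ≤ #X) (h𝒞 : 𝒞 ⊆ X.powersetCard (#X - k)) :
    #𝒞 ≤ #(𝒞.biUnion (powersetCard k)) := by
  have hcount := card_mul_choose_le_card_biUnion_powersetCard_mul k h𝒞
  rw [Nat.choose_symm (by omega : k ≤ #X - k)] at hcount
  exact Nat.le_of_mul_le_mul_right hcount (Nat.choose_pos (by omega))

theorem card_add_card_le_choose_of_cross_intersecting {X : Finset α} {F₁ F₂ : Finset (Finset α)}
    {k : ℕ} (hk : 2 * k ≤ #X) (hF₁ : F₁ ⊆ X.powersetCard k) (hF₂ : F₂ ⊆ X.powersetCard k)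
    (hcross : ∀ A ∈ F₁, ∀ B ∈ F₂, (A ∩ B).Nonempty) :
    #F₁ + #F₂ ≤ (#X).choose k := by
  set 𝒞 := F₂.image (X \ ·)
  set N := 𝒞.biUnion (powersetCard k)
  have hcompl : #𝒞 = #F₂ := card_image_of_injOn fun B₁ hB₁ B₂ hB₂ h => by
    rw [← sdiff_sdiff_eq_self (mem_powersetCard.1 (hF₂ hB₁)).1,
      ← sdiff_sdiff_eq_self (mem_powersetCard.1 (hF₂ hB₂)).1]
    exact congrArg (X \ ·) h
  have h𝒞 : 𝒞 ⊆ X.powersetCard (#X - k) := by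
    rintro _ hC
    obtain ⟨B, hB, rfl⟩ := mem_image.1 hC
    obtain ⟨hBX, hBk⟩ := mem_powersetCard.1 (hF₂ hB)
    exact mem_powersetCard.2 ⟨sdiff_subset, by rw [card_sdiff_of_subset hBX, hBk]⟩
  have hN : N ⊆ X.powersetCard k := by
    intro S hS
    obtain ⟨C, hC, hSC⟩ := mem_biUnion.1 hS
    obtain ⟨hSC, hSk⟩ := mem_powersetCard.1 hSC
    exact mem_powersetCard.2 ⟨hSC.trans (mem_powersetCard.1 (h𝒞 hC)).1, hSk⟩
  have hdisj : Disjoint F₁ N := disjoint_left.2 fun S hS₁ hSN => by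
    obtain ⟨C, hC, hSC⟩ := mem_biUnion.1 hSN
    obtain ⟨B, hB, rfl⟩ := mem_image.1 hC
    obtain ⟨x, hx⟩ := hcross S hS₁ B hB
    exact (mem_sdiff.1 ((mem_powersetCard.1 hSC).1 (mem_inter.1 hx).1)).2 (mem_inter.1 hx).2
  calc #F₁ + #F₂ = #F₁ + #𝒞 := by rw [hcompl]
    _ ≤ #F₁ + #N := Nat.add_le_add_left (card_le_card_biUnion_powersetCard hk h𝒞) _
    _ = #(F₁ ∪ N) := (card_union_of_disjoint hdisj).symm
    _ ≤ #(X.powersetCard k) := card_le_card (union_subset hF₁ hN)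
    _ = (#X).choose k := card_powersetCard k X

end Finset

theorem stmt_18_general (n k : ℕ) (hn : 2 * k ≤ n)
    (F₁ F₂ : Finset (Finset ℕ))
    (hF₁ : F₁ ⊆ (Finset.Icc 1 n).powersetCard k)
    (hF₂ : F₂ ⊆ (Finset.Icc 1 n).powersetCard k)
    (hcross : ∀ A ∈ F₁, ∀ B ∈ F₂, (A ∩ B).Nonempty) :
    F₁.card + F₂.card ≤ max (n.choose k) (2 * (n - 1).choose (k - 1)) := by
  have hX : #(Icc 1 n) = n := by simp
  refine le_max_of_le_left ?_
  rw [← hX] at hn ⊢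
  exact card_add_card_le_choose_of_cross_intersecting hn hF₁ hF₂ hcross

theorem stmt_18 (n k l : ℕ) (hk : 0 < k) (hl : 0 < l) (hn : 2 * k ≤ n)
    (F₁ F₂ : Finset (Finset ℕ))
    (hF₁ : F₁ ⊆ (Finset.Icc 1 n).powersetCard k)
    (hF₂ : F₂ ⊆ (Finset.Icc 1 n).powersetCard k)
    (hcross : ∀ A ∈ F₁, ∀ B ∈ F₂, (A ∩ B).Nonempty) :
    F₁.card + F₂.card ≤ max (n.choose k) (2 * (n - 1).choose (k - 1)) :=
  stmt_18_general n k hn F₁ F₂ hF₁ hF₂ hcross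
end
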